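/- arXiv:2008.05625 — 5 statements merged into one kernel-verified Lean document; each statement's English description precedes it below -/
import Mathlib

section
/- If X_1 and X_2 are i.i.d. random variables with probability density f(x) = α x^{-α-1} for x ≥ 1 (α > 0), then P(X_1 X_2 > x) is asymptotically equivalent to α x^{-α} log x as x → ∞. -/
/-!
For `x ≥ 1` the tail of the product is computed exactly by conditioning on `X₁ = t`:
`P(X₂ > x / t) = (max (x / t) 1) ^ (-α)`, so the range `1 < t ≤ x` contributes
`α x^{-α} log x` and the range `t > x` contributes `P(X₁ > x) = x^{-α}`. Hence
`P(X₁ X₂ > x) = x^{-α} (α log x + 1)`, and the ratio is `1 + 1 / (α log x) → 1`.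
-/

open MeasureTheory Filter Real Set

noncomputable def paretoMeasure (α : ℝ) : Measure ℝ :=
  MeasureTheory.volume.withDensity
    (fun x => ENNReal.ofReal (if 1 ≤ x then α * x ^ (-α - 1) else 0))

noncomputable def aSeq (α γ : ℝ) (n : ℕ) : ℝ := ((n : ℝ) ^ γ * Real.log n) ^ (1/α)

open scoped ENNReal Topology

lemma lintegral_Ioi_ofReal_mul_rpow_neg_sub_one {α s : ℝ} (hα : 0 < α) (hs : 0 < s) :
    ∫⁻ t in Ioi s, ENNReal.ofReal (α * t ^ (-α - 1)) = ENNReal.ofReal (s ^ (-α)) := by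
  rw [← ofReal_integral_eq_lintegral_ofReal
    ((integrableOn_Ioi_rpow_of_lt (by linarith) hs).const_mul α)]
  · rw [integral_const_mul, integral_Ioi_rpow_of_lt (by linarith) hs, sub_add_cancel]
    field_simp
  · filter_upwards [ae_restrict_mem measurableSet_Ioi] with t ht
    have : 0 < t := hs.trans ht
    positivity

lemma lintegral_Ioc_one_ofReal_inv {x : ℝ} (hx : 1 ≤ x) :
    ∫⁻ t in Ioc 1 x, ENNReal.ofReal t⁻¹ = ENNReal.ofReal (log x) := by
  have hint : IntervalIntegrable (fun t : ℝ => t⁻¹) volume 1 x :=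
    intervalIntegral.intervalIntegrable_inv
      (fun t ht => ((uIcc_of_le hx ▸ ht).1 |> zero_lt_one.trans_le).ne') continuousOn_id
  rw [← ofReal_integral_eq_lintegral_ofReal
      ((intervalIntegrable_iff_integrableOn_Ioc_of_le hx).1 hint),
    ← intervalIntegral.integral_of_le hx, integral_inv_of_pos one_pos (by linarith), div_one]
  filter_upwards [ae_restrict_mem measurableSet_Ioc] with t ht
  have : 0 < t := one_pos.trans ht.1
  positivity

lemma paretoMeasure_eq_withDensity (α : ℝ) :
    paretoMeasure α =
      (volume.restrict (Ioi 1)).withDensity fun t => ENNReal.ofReal (α * t ^ (-α - 1)) := by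
  have hdens : (fun x : ℝ => ENNReal.ofReal (if 1 ≤ x then α * x ^ (-α - 1) else 0)) =
      (Ici 1).indicator fun t => ENNReal.ofReal (α * t ^ (-α - 1)) := by
    ext x
    by_cases hx : 1 ≤ x <;> simp [hx]
  rw [paretoMeasure, hdens, withDensity_indicator measurableSet_Ici,
    Measure.restrict_congr_set Ioi_ae_eq_Ici]

instance (α : ℝ) : SFinite (paretoMeasure α) := by
  rw [paretoMeasure_eq_withDensity]
  infer_instance

lemma paretoMeasure_Ioi {α : ℝ} (hα : 0 < α) (s : ℝ) :
    paretoMeasure α (Ioi s) = ENNReal.ofReal (max s 1 ^ (-α)) := by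
  rw [paretoMeasure_eq_withDensity, withDensity_apply _ measurableSet_Ioi,
    Measure.restrict_restrict measurableSet_Ioi, Ioi_inter_Ioi,
    lintegral_Ioi_ofReal_mul_rpow_neg_sub_one hα (zero_lt_one.trans_le (le_max_right s 1))]

lemma lintegral_paretoMeasure (α : ℝ) (g : ℝ → ℝ≥0∞) :
    ∫⁻ t, g t ∂paretoMeasure α =
      ∫⁻ t in Ioi 1, ENNReal.ofReal (α * t ^ (-α - 1)) * g t := by
  rw [paretoMeasure_eq_withDensity, lintegral_withDensity_eq_lintegral_mul_non_measurable _
    (by fun_prop) (ae_of_all _ fun _ => ENNReal.ofReal_lt_top)]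
  rfl

lemma paretoMeasure_prod_mul_gt {α x : ℝ} (hα : 0 < α) (hx : 1 ≤ x) :
    ((paretoMeasure α).prod (paretoMeasure α)) {p : ℝ × ℝ | p.1 * p.2 > x} =
      ENNReal.ofReal (x ^ (-α) * (α * log x + 1)) := by
  have hx0 : 0 < x := zero_lt_one.trans_le hx
  have hsection : ∀ t > 0, Prod.mk t ⁻¹' {p : ℝ × ℝ | p.1 * p.2 > x} = Ioi (x / t) :=
    fun t ht => preimage_const_mul_Ioi₀ x ht
  have hmid : ∫⁻ t in Ioc 1 x, ENNReal.ofReal (α * t ^ (-α - 1)) *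
      paretoMeasure α (Prod.mk t ⁻¹' {p : ℝ × ℝ | p.1 * p.2 > x}) =
        ENNReal.ofReal (α * x ^ (-α) * log x) := by
    rw [ENNReal.ofReal_mul (by positivity), ← lintegral_Ioc_one_ofReal_inv hx,
      ← lintegral_const_mul _ (by fun_prop)]
    refine setLIntegral_congr_fun measurableSet_Ioc fun t ⟨ht1, htx⟩ => ?_
    have ht : 0 < t := one_pos.trans ht1
    rw [hsection t ht, paretoMeasure_Ioi hα, max_eq_left ((one_le_div ht).2 htx),
      ← ENNReal.ofReal_mul (by positivity), ← ENNReal.ofReal_mul (by positivity),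
      div_rpow hx0.le ht.le, sub_eq_add_neg, rpow_add ht, rpow_neg_one]
    congr 1
    field_simp
  have htail : ∫⁻ t in Ioi x, ENNReal.ofReal (α * t ^ (-α - 1)) *
      paretoMeasure α (Prod.mk t ⁻¹' {p : ℝ × ℝ | p.1 * p.2 > x}) =
        ENNReal.ofReal (x ^ (-α)) := by
    rw [← lintegral_Ioi_ofReal_mul_rpow_neg_sub_one hα hx0]
    refine setLIntegral_congr_fun measurableSet_Ioi fun t (hxt : x < t) => ?_
    have ht : 0 < t := hx0.trans hxt
    rw [hsection t ht, paretoMeasure_Ioi hα, max_eq_right ((div_le_one ht).2 hxt.le),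
      one_rpow, ENNReal.ofReal_one, mul_one]
  rw [Measure.prod_apply (s := {p : ℝ × ℝ | p.1 * p.2 > x})
      (measurable_fst.mul measurable_snd measurableSet_Ioi),
    lintegral_paretoMeasure, ← Ioc_union_Ioi_eq_Ioi hx,
    lintegral_union measurableSet_Ioi (Ioc_disjoint_Ioi le_rfl), hmid, htail,
    ← ENNReal.ofReal_add (by have := log_nonneg hx; positivity) (by positivity)]
  ring_nf

theorem stmt0 (α : ℝ) (hα : 0 < α) :
    Tendsto (fun x : ℝ =>
      (((paretoMeasure α).prod (paretoMeasure α)) {p : ℝ × ℝ | p.1 * p.2 > x}).toReal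
        / (α * x ^ (-α) * Real.log x)) atTop (nhds 1) := by
  have hlim : Tendsto (fun x : ℝ => 1 + (α * log x)⁻¹) atTop (𝓝 1) := by
    simpa using tendsto_const_nhds.add (tendsto_log_atTop.const_mul_atTop hα).inv_tendsto_atTop
  refine hlim.congr' ?_
  filter_upwards [eventually_gt_atTop 1] with x hx
  have hlog : 0 < log x := log_pos hx
  have hxα : 0 < x ^ (-α) := rpow_pos_of_pos (zero_lt_one.trans hx) _
  rw [paretoMeasure_prod_mul_gt hα hx.le, ENNReal.toReal_ofReal (by positivity)]
  field_simp
end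

section
/- Let X_1,...,X_n be i.i.d. with density α x^{-α-1}·1{x ≥ 1}, and a_n^α = n^γ log n with γ ∈ (1,2]. Then the expected number of non-isolated vertices n·P(max_{2≤i≤n} X_1 X_i > a_n) is asymptotically (γ-1) n^{2-γ} as n → ∞ (for γ = 2 interpreted as (γ-1)n^{2-γ} = 1). -/
/-!
Conditioning on `X₁ = x`, vertex `1` is isolated iff every other weight is at most `a / x`, an
event of probability `(1 - t)₊ ^ (n - 1)` with `t = (x / a) ^ α`. Cut the range of `x` at `c` with
`c ^ α = a ^ α / n`. On `(1, c]` we have `t ≤ 1 / n`, so `1 - (1 - t) ^ (n - 1)` equals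
`(n - 1) t` up to a relative error `O(n t)`, and integrating `(n - 1) t` against the density
`α x ^ (-α - 1)` gives `(n - 1) a ^ (-α) log (c ^ α)`; the range `x > c` has probability
`c ^ (-α) = n a ^ (-α)`, which is of lower order. For `a ^ α = n ^ γ log n` we have
`log (c ^ α) = (γ - 1) log n + log log n`, so `P = n ^ (1 - γ) (γ - 1 + o(1))`.
-/

open MeasureTheory Filter Real Set

theorem one_sub_pow_le_one_sub_mul_add_sq {t : ℝ} (ht0 : 0 ≤ t) (ht1 : t ≤ 1) (m : ℕ) :
    (1 - t) ^ m ≤ 1 - m * t + (m * t) ^ 2 / 2 := by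
  induction m with
  | zero => simp
  | succ m ih =>
    calc (1 - t) ^ (m + 1) = (1 - t) ^ m * (1 - t) := pow_succ _ _
      _ ≤ (1 - m * t + (m * t) ^ 2 / 2) * (1 - t) := by gcongr
      _ ≤ 1 - (m + 1 : ℕ) * t + ((m + 1 : ℕ) * t) ^ 2 / 2 := by
        push_cast
        nlinarith [mul_nonneg (mul_nonneg (sq_nonneg (m : ℝ)) ht0) (sq_nonneg t)]

theorem rpow_neg_sub_one_mul_div_rpow {α x a : ℝ} (hx : 0 < x) (ha : 0 < a) :
    x ^ (-α - 1) * (x / a) ^ α = x⁻¹ / a ^ α := by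
  rw [div_rpow hx.le ha.le, mul_div_assoc', ← rpow_add hx, ← rpow_neg_one]
  ring_nf

theorem rpow_neg_sub_one_mul_div_rpow_sq {α x a : ℝ} (hx : 0 < x) (ha : 0 < a) :
    x ^ (-α - 1) * ((x / a) ^ α) ^ 2 = x ^ (α - 1) / (a ^ α) ^ 2 := by
  rw [div_rpow hx.le ha.le, div_pow, mul_div_assoc', ← rpow_natCast, ← rpow_mul hx.le,
    ← rpow_add hx]
  ring_nf

theorem prod_pi_setOf_exists_mul_gt {μ ν : Measure ℝ} [SFinite μ] [IsProbabilityMeasure ν]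
    (hμ : ∀ᵐ x ∂μ, 0 < x) (a : ℝ) (m : ℕ) :
    (μ.prod (Measure.pi fun _ : Fin m => ν)) {p : ℝ × (Fin m → ℝ) | ∃ i, p.1 * p.2 i > a}
      = ∫⁻ x, 1 - ν (Iic (a / x)) ^ m ∂μ := by
  have hmeas : MeasurableSet {p : ℝ × (Fin m → ℝ) | ∃ i, p.1 * p.2 i > a} := by
    simp only [ofPred_exists]
    exact .iUnion fun i => measurableSet_lt measurable_const
      (measurable_fst.mul ((measurable_pi_apply i).comp measurable_snd))
  rw [Measure.prod_apply hmeas]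
  refine lintegral_congr_ae (hμ.mono fun x hx => ?_)
  have hsection : Prod.mk x ⁻¹' {p : ℝ × (Fin m → ℝ) | ∃ i, p.1 * p.2 i > a}
      = (univ.pi fun _ => Iic (a / x))ᶜ := by
    ext y
    simp only [mem_preimage, mem_ofPred_eq, mem_compl_iff, mem_univ_pi, mem_Iic, not_forall,
      not_le, gt_iff_lt, div_lt_iff₀ hx, mul_comm x]
  dsimp only
  rw [hsection, prob_compl_eq_one_sub (.univ_pi fun _ => measurableSet_Iic), Measure.pi_pi,
    Finset.prod_const, Finset.card_univ, Fintype.card_fin]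

/-- `linkProb m ((x / a) ^ α)` is the probability that a vertex of weight `x` is linked to at least
one of `m` independent Pareto vertices: `(x / a) ^ α` is the tail `P(X > a / x)`, capped at `1`. -/
noncomputable def linkProb (m : ℕ) (t : ℝ) : ℝ := 1 - max (1 - t) 0 ^ m

theorem linkProb_nonneg {t : ℝ} (ht : 0 ≤ t) (m : ℕ) : 0 ≤ linkProb m t :=
  sub_nonneg.mpr (pow_le_one₀ (le_max_right _ _) (max_le (by linarith) zero_le_one))

theorem linkProb_le_one (m : ℕ) (t : ℝ) : linkProb m t ≤ 1 :=
  sub_le_self _ (pow_nonneg (le_max_right _ _) m)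

theorem linkProb_le_mul {t : ℝ} (ht : t ≤ 1) (m : ℕ) : linkProb m t ≤ m * t := by
  have := one_add_mul_le_pow (a := -t) (by linarith) m
  rw [← sub_eq_add_neg] at this
  rw [linkProb, max_eq_left (by linarith)]
  linarith

theorem mul_sub_sq_le_linkProb {t : ℝ} (ht0 : 0 ≤ t) (ht1 : t ≤ 1) (m : ℕ) :
    m * t - (m * t) ^ 2 / 2 ≤ linkProb m t := by
  have := one_sub_pow_le_one_sub_mul_add_sq ht0 ht1 m
  rw [linkProb, max_eq_left (by linarith)]
  linarith

noncomputable def sandwichBound (γ k : ℝ) (n : ℕ) : ℝ :=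
  ((n : ℝ) - 1) / n * ((log ((n : ℝ) ^ (γ - 1) * log n) + k) / ((γ - 1) * log n))

theorem tendsto_sandwichBound {γ : ℝ} (hγ : 1 < γ) (k : ℝ) :
    Tendsto (sandwichBound γ k) atTop (nhds 1) := by
  have hlog : Tendsto (fun n : ℕ => log n) atTop atTop :=
    tendsto_log_atTop.comp tendsto_natCast_atTop_atTop
  have hinv : Tendsto (fun n : ℕ => (n : ℝ)⁻¹) atTop (nhds 0) :=
    tendsto_inv_atTop_zero.comp tendsto_natCast_atTop_atTop
  have hloglog : Tendsto (fun n : ℕ => log (log n) / log n) atTop (nhds 0) :=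
    isLittleO_log_id_atTop.tendsto_div_nhds_zero.comp hlog
  have hlim : Tendsto (fun n : ℕ => (1 - (n : ℝ)⁻¹) *
      (1 + (γ - 1)⁻¹ * (log (log n) / log n + k * (log n)⁻¹))) atTop (nhds 1) := by
    simpa using ((tendsto_const_nhds (x := (1 : ℝ))).sub hinv).mul
      ((tendsto_const_nhds (x := (1 : ℝ))).add
      ((hloglog.add ((tendsto_inv_atTop_zero.comp hlog).const_mul k)).const_mul (γ - 1)⁻¹))
  refine hlim.congr' ((eventually_ge_atTop 3).mono fun n hn => ?_)
  have hn : (3 : ℝ) ≤ n := by exact_mod_cast hn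
  have hL : 0 < log n := log_pos (by linarith)
  have hγ' : γ - 1 ≠ 0 := by linarith
  rw [sandwichBound, log_mul (by positivity) hL.ne', log_rpow (by linarith)]
  field_simp
  ring

namespace Pareto

variable {α γ : ℝ}

noncomputable def density (α x : ℝ) : ℝ := if 1 ≤ x then α * x ^ (-α - 1) else 0

theorem paretoMeasure_eq_withDensity :
    paretoMeasure α = volume.withDensity fun x => ENNReal.ofReal (density α x) := rfl

theorem measurable_density : Measurable (density α) :=
  Measurable.ite measurableSet_Ici (by fun_prop) measurable_const

theorem paretoMeasure_Iio_one : paretoMeasure α (Iio 1) = 0 := by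
  rw [paretoMeasure_eq_withDensity, withDensity_apply _ measurableSet_Iio]
  refine (setLIntegral_congr_fun measurableSet_Iio fun x (hx : x < 1) => ?_).trans lintegral_zero
  simp [density, not_le.mpr hx]

theorem ae_one_le_paretoMeasure : ∀ᵐ x ∂paretoMeasure α, 1 ≤ x :=
  measure_mono_null (fun x (hx : ¬1 ≤ x) => not_le.mp hx) paretoMeasure_Iio_one

theorem integral_paretoMeasure (hα : 0 ≤ α) (g : ℝ → ℝ) :
    ∫ x, g x ∂paretoMeasure α = ∫ x in Ioi 1, α * x ^ (-α - 1) * g x := by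
  rw [paretoMeasure_eq_withDensity, integral_withDensity_eq_integral_toReal_smul
    measurable_density.ennreal_ofReal (ae_of_all _ fun _ => ENNReal.ofReal_lt_top),
    ← integral_Ici_eq_integral_Ioi, ← integral_indicator measurableSet_Ici]
  congr 1 with x
  by_cases hx : 1 ≤ x
  · have : 0 ≤ α * x ^ (-α - 1) := mul_nonneg hα (rpow_nonneg (by linarith) _)
    simp [density, hx, ENNReal.toReal_ofReal this]
  · simp [density, hx]

theorem integral_Ioi_pareto (hα : 0 < α) {t : ℝ} (ht : 0 < t) :
    ∫ x in Ioi t, α * x ^ (-α - 1) = t ^ (-α) := by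
  rw [integral_const_mul, integral_Ioi_rpow_of_lt (by linarith) ht, sub_add_cancel]
  field_simp

theorem paretoMeasure_Ioi (hα : 0 < α) {t : ℝ} (ht : 1 ≤ t) :
    paretoMeasure α (Ioi t) = ENNReal.ofReal (t ^ (-α)) := by
  have ht0 : 0 < t := by linarith
  rw [paretoMeasure_eq_withDensity, withDensity_apply _ measurableSet_Ioi,
    setLIntegral_congr_fun measurableSet_Ioi fun x (hx : t < x) => by
      rw [density, if_pos (ht.trans hx.le)],
    ← ofReal_integral_eq_lintegral_ofReal
      ((integrableOn_Ioi_rpow_of_lt (by linarith) ht0).const_mul α)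
      ((ae_restrict_iff' measurableSet_Ioi).mpr (ae_of_all _ fun x (hx : t < x) => by
        have : 0 < x := ht0.trans hx
        positivity)),
    integral_Ioi_pareto hα ht0]

theorem isProbabilityMeasure_paretoMeasure (hα : 0 < α) :
    IsProbabilityMeasure (paretoMeasure α) := by
  constructor
  rw [← Iio_union_Ici (a := (1 : ℝ)), measure_union (Iio_disjoint_Ici le_rfl) measurableSet_Ici,
    paretoMeasure_Iio_one, zero_add, measure_congr (Ioi_ae_eq_Ici' (μ := paretoMeasure α)
      (withDensity_absolutelyContinuous _ _ volume_singleton)).symm, paretoMeasure_Ioi hα le_rfl]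
  simp

/-- For `s < 1` both sides vanish, the right one because `ENNReal.ofReal` truncates the negative
number `1 - s ^ (-α)` to `0`. -/
theorem paretoMeasure_Iic (hα : 0 < α) {s : ℝ} (hs : 0 < s) :
    paretoMeasure α (Iic s) = ENNReal.ofReal (1 - s ^ (-α)) := by
  have := isProbabilityMeasure_paretoMeasure hα
  rcases le_or_gt 1 s with h1 | h1
  · rw [← compl_Ioi, prob_compl_eq_one_sub measurableSet_Ioi, paretoMeasure_Ioi hα h1,
      ← ENNReal.ofReal_one, ← ENNReal.ofReal_sub _ (rpow_nonneg hs.le _)]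
  · rw [measure_mono_null (Iic_subset_Iio.mpr h1) paretoMeasure_Iio_one, eq_comm,
      ENNReal.ofReal_eq_zero, sub_nonpos]
    exact one_le_rpow_of_pos_of_le_one_of_nonpos hs h1.le (by linarith)

noncomputable def nonIsolatedProb (α a : ℝ) (m : ℕ) : ℝ :=
  (((paretoMeasure α).prod (Measure.pi fun _ : Fin m => paretoMeasure α))
    {p : ℝ × (Fin m → ℝ) | ∃ i, p.1 * p.2 i > a}).toReal

theorem nonIsolatedProb_eq_integral (hα : 0 < α) {a : ℝ} (ha : 0 < a) (m : ℕ) :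
    nonIsolatedProb α a m = ∫ x in Ioi 1, α * x ^ (-α - 1) * linkProb m ((x / a) ^ α) := by
  have := isProbabilityMeasure_paretoMeasure hα
  have hpos : ∀ᵐ x ∂paretoMeasure α, 0 < x :=
    ae_one_le_paretoMeasure.mono fun x hx => by linarith
  have hlink : ∀ᵐ x ∂paretoMeasure α,
      1 - paretoMeasure α (Iic (a / x)) ^ m = ENNReal.ofReal (linkProb m ((x / a) ^ α)) := by
    refine hpos.mono fun x hx => ?_
    have htail : (a / x) ^ (-α) = (x / a) ^ α := by
      rw [rpow_neg (by positivity), ← inv_rpow (by positivity), inv_div]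
    rw [paretoMeasure_Iic hα (by positivity), htail, linkProb,
      ENNReal.ofReal_sub _ (pow_nonneg (le_max_right _ _) m), ENNReal.ofReal_one,
      ENNReal.ofReal_pow (le_max_right _ _), ENNReal.ofReal_max, ENNReal.ofReal_zero,
      max_eq_left zero_le]
  rw [nonIsolatedProb, prod_pi_setOf_exists_mul_gt hpos, lintegral_congr_ae hlink,
    ← integral_eq_lintegral_of_nonneg_ae
      (hpos.mono fun x hx => linkProb_nonneg (by positivity) m)
      (Measurable.aestronglyMeasurable (by unfold linkProb; fun_prop)),
    integral_paretoMeasure hα.le]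

theorem integrableOn_Ioi_pareto_mul_linkProb (hα : 0 < α) {a : ℝ} (ha : 0 < a) (m : ℕ) :
    IntegrableOn (fun x => α * x ^ (-α - 1) * linkProb m ((x / a) ^ α)) (Ioi 1) := by
  refine ((integrableOn_Ioi_rpow_of_lt (a := -α - 1) (by linarith) one_pos).const_mul α).mono'
    (Measurable.aestronglyMeasurable (by unfold linkProb; fun_prop))
    ((ae_restrict_iff' measurableSet_Ioi).mpr (ae_of_all _ fun x (hx : 1 < x) => ?_))
  have hdens : 0 ≤ α * x ^ (-α - 1) := by
    have : 0 < x := by linarith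
    positivity
  have hlink := linkProb_nonneg (rpow_nonneg (div_nonneg (by linarith : (0 : ℝ) ≤ x) ha.le) α) m
  rw [Real.norm_of_nonneg (mul_nonneg hdens hlink)]
  exact mul_le_of_le_one_right hdens (linkProb_le_one m _)

theorem integral_pareto_mul_linkProb_le (hα : 0 < α) {a c : ℝ} (hc : 1 ≤ c) (hca : c ≤ a)
    (m : ℕ) :
    ∫ x in Ioi 1, α * x ^ (-α - 1) * linkProb m ((x / a) ^ α)
      ≤ m * α * log c / a ^ α + c ^ (-α) := by
  have ha : 0 < a := by linarith
  have hF := integrableOn_Ioi_pareto_mul_linkProb hα ha m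
  rw [← Ioc_union_Ioi_eq_Ioi hc, setIntegral_union (Ioc_disjoint_Ioi le_rfl) measurableSet_Ioi
    (hF.mono_set Ioc_subset_Ioi_self) (hF.mono_set (Ioi_subset_Ioi hc))]
  gcongr
  · have hinv : IntegrableOn (fun x : ℝ => m * α / a ^ α * x⁻¹) (Ioc 1 c) :=
      ((intervalIntegral.intervalIntegrable_inv (fun x hx => ((uIcc_of_le hc ▸ hx).1).trans_lt' one_pos |>.ne')
        continuousOn_id).const_mul _).1
    calc ∫ x in Ioc 1 c, α * x ^ (-α - 1) * linkProb m ((x / a) ^ α)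
        ≤ ∫ x in Ioc 1 c, m * α / a ^ α * x⁻¹ := by
          refine setIntegral_mono_on (hF.mono_set Ioc_subset_Ioi_self) hinv measurableSet_Ioc
            fun x ⟨hx1, hxc⟩ => ?_
          have hx : 0 < x := by linarith
          have ht1 : (x / a) ^ α ≤ 1 :=
            rpow_le_one (by positivity) ((div_le_one ha).mpr (hxc.trans hca)) hα.le
          calc α * x ^ (-α - 1) * linkProb m ((x / a) ^ α)
              ≤ α * x ^ (-α - 1) * (m * (x / a) ^ α) := by
                gcongr
                exact linkProb_le_mul ht1 m
            _ = m * α * (x ^ (-α - 1) * (x / a) ^ α) := by ring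
            _ = m * α / a ^ α * x⁻¹ := by rw [rpow_neg_sub_one_mul_div_rpow hx ha]; ring
      _ = m * α * log c / a ^ α := by
          rw [integral_const_mul, ← intervalIntegral.integral_of_le hc,
            integral_inv_of_pos one_pos (by linarith), div_one]
          ring
  · calc ∫ x in Ioi c, α * x ^ (-α - 1) * linkProb m ((x / a) ^ α)
        ≤ ∫ x in Ioi c, α * x ^ (-α - 1) :=
          setIntegral_mono_on (hF.mono_set (Ioi_subset_Ioi hc))
            ((integrableOn_Ioi_rpow_of_lt (by linarith) (by linarith)).const_mul α)
            measurableSet_Ioi fun x (hx : c < x) => by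
              have : 0 < x := by linarith
              have : 0 ≤ (x / a) ^ α := by positivity
              exact mul_le_of_le_one_right (by positivity) (linkProb_le_one m _)
      _ = c ^ (-α) := integral_Ioi_pareto hα (by linarith)

theorem integral_Ioc_one_mul_rpow_sub_one (hα : 0 < α) {c : ℝ} (hc : 1 ≤ c) :
    ∫ x in Ioc 1 c, α * x ^ (α - 1) = c ^ α - 1 := by
  rw [← intervalIntegral.integral_of_le hc, intervalIntegral.integral_const_mul,
    integral_rpow (Or.inl (by linarith)), sub_add_cancel, one_rpow]
  field_simp

theorem le_integral_pareto_mul_linkProb (hα : 0 < α) {a c : ℝ} (hc : 1 ≤ c) (hca : c ≤ a)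
    (m : ℕ) :
    m * α * log c / a ^ α - m ^ 2 * (c ^ α - 1) / (2 * (a ^ α) ^ 2)
      ≤ ∫ x in Ioi 1, α * x ^ (-α - 1) * linkProb m ((x / a) ^ α) := by
  have ha : 0 < a := by linarith
  have hF := integrableOn_Ioi_pareto_mul_linkProb hα ha m
  have hinv : IntegrableOn (fun x : ℝ => m * α / a ^ α * x⁻¹) (Ioc 1 c) :=
    ((intervalIntegral.intervalIntegrable_inv
      (fun x hx => ((uIcc_of_le hc ▸ hx).1).trans_lt' one_pos |>.ne')
      continuousOn_id).const_mul _).1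
  have hrpow : IntegrableOn (fun x : ℝ => m ^ 2 / (2 * (a ^ α) ^ 2) * (α * x ^ (α - 1)))
      (Ioc 1 c) :=
    (((intervalIntegral.intervalIntegrable_rpow' (by linarith)).const_mul α).const_mul _).1
  calc m * α * log c / a ^ α - m ^ 2 * (c ^ α - 1) / (2 * (a ^ α) ^ 2)
      = ∫ x in Ioc 1 c, (m * α / a ^ α * x⁻¹ - m ^ 2 / (2 * (a ^ α) ^ 2) * (α * x ^ (α - 1))) := by
        rw [integral_sub hinv hrpow, integral_const_mul, integral_const_mul,
          integral_Ioc_one_mul_rpow_sub_one hα hc, ← intervalIntegral.integral_of_le hc,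
          integral_inv_of_pos one_pos (by linarith), div_one]
        ring
    _ ≤ ∫ x in Ioc 1 c, α * x ^ (-α - 1) * linkProb m ((x / a) ^ α) := by
        refine setIntegral_mono_on (hinv.sub hrpow) (hF.mono_set Ioc_subset_Ioi_self)
          measurableSet_Ioc fun x ⟨hx1, hxc⟩ => ?_
        have hx : 0 < x := by linarith
        have ht0 : 0 ≤ (x / a) ^ α := by positivity
        have ht1 : (x / a) ^ α ≤ 1 :=
          rpow_le_one (by positivity) ((div_le_one ha).mpr (hxc.trans hca)) hα.le
        calc m * α / a ^ α * x⁻¹ - m ^ 2 / (2 * (a ^ α) ^ 2) * (α * x ^ (α - 1))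
            = α * x ^ (-α - 1) * (m * (x / a) ^ α - (m * (x / a) ^ α) ^ 2 / 2) := by
              linear_combination (-(m * α)) * rpow_neg_sub_one_mul_div_rpow (α := α) hx ha
                + (m ^ 2 * α / 2) * rpow_neg_sub_one_mul_div_rpow_sq (α := α) hx ha
          _ ≤ α * x ^ (-α - 1) * linkProb m ((x / a) ^ α) := by
              gcongr
              exact mul_sub_sq_le_linkProb ht0 ht1 m
    _ ≤ ∫ x in Ioi 1, α * x ^ (-α - 1) * linkProb m ((x / a) ^ α) :=
        setIntegral_mono_set hF
          ((ae_restrict_iff' measurableSet_Ioi).mpr (ae_of_all _ fun x (hx : 1 < x) => by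
            have : 0 < x := by linarith
            have : 0 ≤ (x / a) ^ α := by positivity
            exact mul_nonneg (by positivity) (linkProb_nonneg this m)))
          Ioc_subset_Ioi_self.eventuallyLE

theorem nonIsolatedProb_mem_Icc (hα : 0 < α) {a c : ℝ} (hc : 1 ≤ c) (hca : c ≤ a) (m : ℕ) :
    nonIsolatedProb α a m ∈ Icc (m * α * log c / a ^ α - m ^ 2 * (c ^ α - 1) / (2 * (a ^ α) ^ 2))
      (m * α * log c / a ^ α + c ^ (-α)) := by
  rw [nonIsolatedProb_eq_integral hα (by linarith) m]
  exact ⟨le_integral_pareto_mul_linkProb hα hc hca m, integral_pareto_mul_linkProb_le hα hc hca m⟩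

theorem aSeq_rpow (hα : α ≠ 0) (n : ℕ) : aSeq α γ n ^ α = n ^ γ * log n := by
  rw [aSeq, ← rpow_mul (by positivity), one_div_mul_cancel hα, rpow_one]

theorem nonIsolatedProb_aSeq_mul_mem_Icc (hα : 0 < α) (hγ : 1 < γ) {n : ℕ} (hn : 3 ≤ n) :
    nonIsolatedProb α (aSeq α γ n) (n - 1) * ((n : ℝ) ^ (γ - 1) * log n)
      ∈ Icc (((n : ℝ) - 1) / n * (log ((n : ℝ) ^ (γ - 1) * log n) - 1 / 2))
        (((n : ℝ) - 1) / n * (log ((n : ℝ) ^ (γ - 1) * log n) + 2)) := by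
  have hn : (3 : ℝ) ≤ n := by exact_mod_cast hn
  have hL : 1 ≤ log n := by
    rw [le_log_iff_exp_le (by linarith)]
    linarith [exp_one_lt_d9]
  set B := (n : ℝ) ^ (γ - 1) * log n with hBdef
  have hB : 1 ≤ B := one_le_mul_of_one_le_of_one_le
    (one_le_rpow (by linarith) (by linarith)) hL
  have haα : aSeq α γ n ^ α = n * B := by
    rw [aSeq_rpow hα.ne', hBdef, rpow_sub_one (by positivity)]
    field_simp
  set c := B ^ (1 / α)
  have hcα : c ^ α = B := by rw [← rpow_mul (by positivity), one_div_mul_cancel hα.ne', rpow_one]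
  have hc : 1 ≤ c := one_le_rpow hB (by positivity)
  have hca : c ≤ aSeq α γ n := by
    refine (rpow_le_rpow_iff (by positivity) (by unfold aSeq; positivity) hα).mp ?_
    rw [hcα, haα]
    exact le_mul_of_one_le_left (by positivity) (by linarith)
  have hlogc : α * log c = log B := by rw [← log_rpow (by positivity), hcα]
  have hm : ((n - 1 : ℕ) : ℝ) = n - 1 := by rw [Nat.cast_sub (by omega), Nat.cast_one]
  obtain ⟨hlow, hup⟩ := nonIsolatedProb_mem_Icc hα hc hca (n - 1)
  rw [hm, mul_assoc _ α, hlogc, haα, rpow_neg (by positivity), hcα] at hup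
  rw [hm, mul_assoc _ α, hlogc, haα, hcα] at hlow
  have hB0 : 0 < B := by linarith
  have hr : 0 ≤ ((n : ℝ) - 1) / n := div_nonneg (by linarith) (by linarith)
  constructor
  · calc ((n : ℝ) - 1) / n * (log B - 1 / 2)
        ≤ ((n : ℝ) - 1) / n * (log B - (n - 1) * (B - 1) / (2 * (n * B))) := by
          refine mul_le_mul_of_nonneg_left (sub_le_sub_left ?_ _) hr
          rw [div_le_iff₀ (by positivity)]
          nlinarith
      _ = ((n - 1) * log B / (n * B) - (n - 1) ^ 2 * (B - 1) / (2 * (n * B) ^ 2)) * B := by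
          field_simp
      _ ≤ _ := by gcongr
  · calc nonIsolatedProb α (aSeq α γ n) (n - 1) * B ≤ ((n - 1) * log B / (n * B) + B⁻¹) * B := by
          gcongr
      _ = ((n : ℝ) - 1) / n * log B + 1 := by field_simp
      _ ≤ ((n : ℝ) - 1) / n * (log B + 2) := by
          rw [mul_add, add_le_add_iff_left, div_mul_eq_mul_div, le_div_iff₀ (by positivity)]
          linarith

theorem normalized_nonIsolatedProb_aSeq_mem_Icc (hα : 0 < α) (hγ : 1 < γ) {n : ℕ}
    (hn : 3 ≤ n) :
    n * nonIsolatedProb α (aSeq α γ n) (n - 1) / ((γ - 1) * (n : ℝ) ^ (2 - γ))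
      ∈ Icc (sandwichBound γ (-1 / 2) n) (sandwichBound γ 2 n) := by
  obtain ⟨hlow, hup⟩ := nonIsolatedProb_aSeq_mul_mem_Icc hα hγ hn
  have hn : (3 : ℝ) ≤ n := by exact_mod_cast hn
  have hD : 0 < (γ - 1) * log n := mul_pos (by linarith) (log_pos (by linarith))
  have hnormal : n * nonIsolatedProb α (aSeq α γ n) (n - 1) / ((γ - 1) * (n : ℝ) ^ (2 - γ))
      = nonIsolatedProb α (aSeq α γ n) (n - 1) * ((n : ℝ) ^ (γ - 1) * log n)
        / ((γ - 1) * log n) := by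
    have : log n ≠ 0 := (log_pos (by linarith)).ne'
    have : γ - 1 ≠ 0 := by linarith
    rw [show 2 - γ = 1 - (γ - 1) by ring, rpow_sub (by linarith), rpow_one]
    field_simp
  rw [hnormal, sandwichBound, sandwichBound, ← mul_div_assoc, ← mul_div_assoc, neg_div,
    ← sub_eq_add_neg]
  exact ⟨div_le_div_of_nonneg_right hlow hD.le, div_le_div_of_nonneg_right hup hD.le⟩

end Pareto

open Pareto in
theorem stmt3_general (α γ : ℝ) (hα : 0 < α) (hγ1 : 1 < γ) :
    Tendsto (fun n : ℕ =>
      (n : ℝ) * (((paretoMeasure α).prod (Measure.pi fun _ : Fin (n-1) => paretoMeasure α))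
        {p : ℝ × (Fin (n-1) → ℝ) | ∃ i, p.1 * p.2 i > aSeq α γ n}).toReal
      / ((γ - 1) * (n : ℝ) ^ (2 - γ))) atTop (nhds 1) := by
  refine tendsto_of_tendsto_of_tendsto_of_le_of_le' (tendsto_sandwichBound hγ1 (-1 / 2))
    (tendsto_sandwichBound hγ1 2) ?_ ?_ <;> filter_upwards [eventually_ge_atTop 3] with n hn
  exacts [(normalized_nonIsolatedProb_aSeq_mem_Icc hα hγ1 hn).1,
    (normalized_nonIsolatedProb_aSeq_mem_Icc hα hγ1 hn).2]

theorem stmt3 (α γ : ℝ) (hα : 0 < α) (hγ1 : 1 < γ) (hγ2 : γ ≤ 2) :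
    Tendsto (fun n : ℕ =>
      (n : ℝ) * (((paretoMeasure α).prod (Measure.pi fun _ : Fin (n-1) => paretoMeasure α))
        {p : ℝ × (Fin (n-1) → ℝ) | ∃ i, p.1 * p.2 i > aSeq α γ n}).toReal
      / ((γ - 1) * (n : ℝ) ^ (2 - γ))) atTop (nhds 1) :=
  stmt3_general α γ hα hγ1
end

section
/- Let F̄(x) = x^{-α} L(x) with L slowly varying, and let a_n* satisfy n F̄(√a_n*) → 1. If E X_1^α = ∞ (where X_1 has tail F̄), then F̄(x) = o(F̄_2(x)) as x → ∞, where F̄_2(x) = P(X_1 X_2 > x) for independent copies X_1, X_2; consequently a_n* = o(a_{2,n}*), where n F̄_2(√a_{2,n}*) → 1. -/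
open MeasureTheory Filter Real Set

def SlowlyVarying (L : ℝ → ℝ) : Prop :=
  ∀ c > (0 : ℝ), Tendsto (fun x => L (c * x) / L x) atTop (nhds 1)

/-!
Write `F̄` for the tail of `X₁` and `μ` for its law. Since `F̄₂(x) = ∫ F̄(x / s) dμ(s)` and
`F̄(x / s) / F̄(x) → s ^ α` by regular variation, Fatou's lemma gives
`liminf F̄₂(x) / F̄(x) ≥ E X₁ ^ α = ∞`.

For the quantiles, regular variation also yields `F̄₂(c y) ≤ C_c F̄₂(y)` for every `c > 0`: split
`F̄₂(c y) = ∫ F̄(c y / s) dμ(s)` at `s = y / T`, where `F̄(c u) ≤ (c ^ (-α) + 1) F̄(u)` for `u ≥ T`,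
and bound the part `s > y / T` by `F̄₂(y) / F̄(T)` using the rectangle `{s > y / T, t > T}`.
Now `n F̄₂(√a_n) → ∞` (as `n F̄(√a_n) → 1` and `F̄ = o(F̄₂)`), while `n F̄₂(ε √a_{2,n})` stays
bounded, so monotonicity of `F̄₂` forces `√a_n < ε √a_{2,n}` eventually.
-/

open scoped ENNReal Topology Asymptotics

lemma tendsto_div_of_eq_rpow_mul_slowlyVarying {F L : ℝ → ℝ} {α : ℝ} (hL : SlowlyVarying L)
    (hF : ∀ x > 0, F x = x ^ (-α) * L x) {c : ℝ} (hc : 0 < c) :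
    Tendsto (fun x => F (c * x) / F x) atTop (𝓝 (c ^ (-α))) := by
  have hlim : Tendsto (fun x => c ^ (-α) * (L (c * x) / L x)) atTop (𝓝 (c ^ (-α))) := by
    simpa using (hL c hc).const_mul (c ^ (-α))
  refine hlim.congr' ?_
  filter_upwards [eventually_gt_atTop 0] with x hx
  rw [hF x hx, hF (c * x) (mul_pos hc hx), mul_rpow hc.le hx.le, mul_assoc, mul_div_assoc,
    mul_div_mul_left _ _ (rpow_pos_of_pos hx _).ne']

lemma tendsto_toReal_div_of_tendsto_div_top {ι : Type*} {l : Filter ι} {f g : ι → ℝ≥0∞}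
    (hf0 : ∀ i, f i ≠ 0) (hf : ∀ i, f i ≠ ∞)
    (h : Tendsto (fun i => g i / f i) l (𝓝 ∞)) :
    Tendsto (fun i => (f i).toReal / (g i).toReal) l (𝓝 0) := by
  have hinv : Tendsto (fun i => f i / g i) l (𝓝 0) := by
    simpa [ENNReal.inv_div (Or.inl (hf _)) (Or.inl (hf0 _))] using tendsto_inv_iff.2 h
  exact ((ENNReal.tendsto_toReal ENNReal.zero_ne_top).comp hinv).congr fun i =>
    ENNReal.toReal_div _ _

lemma tendsto_atTop_of_antitone_of_tendsto_zero {ι : Type*} {l : Filter ι} {G : ℝ → ℝ}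
    {b : ι → ℝ} (hG : Antitone G) (hpos : ∀ y, 0 < G y)
    (h : Tendsto (fun i => G (b i)) l (𝓝 0)) : Tendsto b l atTop := by
  rw [tendsto_atTop]
  intro M
  filter_upwards [h.eventually_lt_const (hpos M)] with i hi
  by_contra! hlt
  exact (hG hlt.le).not_gt hi

lemma tendsto_zero_of_tendsto_natCast_mul {u : ℕ → ℝ} {c : ℝ}
    (h : Tendsto (fun n : ℕ => (n : ℝ) * u n) atTop (𝓝 c)) : Tendsto u atTop (𝓝 0) := by
  refine (h.div_atTop (tendsto_natCast_atTop_atTop (R := ℝ))).congr' ?_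
  filter_upwards [eventually_ne_atTop 0] with n hn
  field_simp

lemma tendsto_div_zero_of_natCast_mul_tendsto_atTop {G : ℝ → ℝ} (hG : Antitone G)
    (hG0 : ∀ y, 0 ≤ G y) (hGc : ∀ c > 0, (fun y => G (c * y)) =O[atTop] G) {b b' : ℕ → ℝ}
    (hb : ∀ n, 0 ≤ b n) (hb' : Tendsto b' atTop atTop)
    (h : Tendsto (fun n => n * G (b n)) atTop atTop)
    (h' : IsBoundedUnder (· ≤ ·) atTop (fun n => n * G (b' n))) :
    Tendsto (fun n => b n / b' n) atTop (𝓝 0) := by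
  rw [Metric.tendsto_nhds]
  intro ε hε
  obtain ⟨C, hC, hCε⟩ := (hGc ε hε).exists_pos
  obtain ⟨B, hB⟩ := h'
  filter_upwards [hb'.eventually hCε.bound, hB, h.eventually_gt_atTop (C * B),
    hb'.eventually_gt_atTop 0] with n hCn hBn hn hpos
  simp only [Real.norm_eq_abs, abs_of_nonneg (hG0 _)] at hCn
  have hlt : (n : ℝ) * G (ε * b' n) < n * G (b n) := calc
    (n : ℝ) * G (ε * b' n) ≤ C * (n * G (b' n)) := by
      rw [mul_left_comm]; exact mul_le_mul_of_nonneg_left hCn n.cast_nonneg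
    _ ≤ C * B := mul_le_mul_of_nonneg_left hBn hC.le
    _ < n * G (b n) := hn
  have hbn : b n < ε * b' n := by
    by_contra! hge
    exact (lt_of_mul_lt_mul_left hlt n.cast_nonneg).not_ge (hG hge)
  rw [Real.dist_eq, sub_zero, abs_of_nonneg (div_nonneg (hb n) hpos.le), div_lt_iff₀ hpos]
  exact hbn

lemma tendsto_div_zero_of_natCast_mul_tendsto_one {F G : ℝ → ℝ} (hF : Antitone F)
    (hFpos : ∀ y, 0 < F y) (hG : Antitone G) (hGpos : ∀ y, 0 < G y)
    (hGc : ∀ c > 0, (fun y => G (c * y)) =O[atTop] G)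
    (hFG : Tendsto (fun x => F x / G x) atTop (𝓝 0)) {b b' : ℕ → ℝ} (hb : ∀ n, 0 ≤ b n)
    (h : Tendsto (fun n => n * F (b n)) atTop (𝓝 1))
    (h' : Tendsto (fun n => n * G (b' n)) atTop (𝓝 1)) :
    Tendsto (fun n => b n / b' n) atTop (𝓝 0) := by
  have hbtop := tendsto_atTop_of_antitone_of_tendsto_zero hF hFpos
    (tendsto_zero_of_tendsto_natCast_mul h)
  have hb'top := tendsto_atTop_of_antitone_of_tendsto_zero hG hGpos
    (tendsto_zero_of_tendsto_natCast_mul h')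
  have hGF : Tendsto (fun n => (F (b n) / G (b n))⁻¹) atTop atTop :=
    tendsto_inv_nhdsGT_zero.comp (tendsto_nhdsWithin_iff.2
      ⟨hFG.comp hbtop, Eventually.of_forall fun n => div_pos (hFpos _) (hGpos _)⟩)
  refine tendsto_div_zero_of_natCast_mul_tendsto_atTop hG (fun y => (hGpos y).le) hGc hb hb'top
    ?_ h'.isBoundedUnder_le
  refine (h.pos_mul_atTop one_pos hGF).congr fun n => ?_
  field_simp [(hFpos (b n)).ne']

section TailsOnReals

variable {μ ν : Measure ℝ} {α : ℝ}

lemma measure_Ioi_ne_zero_of_lintegral_rpow_eq_top [IsFiniteMeasure μ] (hα : 0 ≤ α)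
    (h0 : ∀ᵐ t ∂μ, 0 ≤ t) (hmoment : ∫⁻ t, ENNReal.ofReal (t ^ α) ∂μ = ∞) (x : ℝ) :
    μ (Ioi x) ≠ 0 := by
  intro hx
  have hbdd : ∀ᵐ t ∂μ, ENNReal.ofReal (t ^ α) ≤ ENNReal.ofReal (max x 0 ^ α) := by
    filter_upwards [h0, measure_eq_zero_iff_ae_notMem.1 hx] with t ht0 htx
    exact ENNReal.ofReal_le_ofReal
      (rpow_le_rpow ht0 ((not_lt.1 htx).trans (le_max_left _ _)) hα)
  have hfin : ∫⁻ _, ENNReal.ofReal (max x 0 ^ α) ∂μ < ∞ := by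
    rw [lintegral_const]
    exact ENNReal.mul_lt_top ENNReal.ofReal_lt_top (measure_lt_top _ _)
  exact ((lintegral_mono_ae hbdd).trans_lt hfin).ne hmoment

lemma tendsto_measure_Ioi_mul_div [IsFiniteMeasure ν] (hpos : ∀ x, ν (Ioi x) ≠ 0) {c r : ℝ}
    (h : Tendsto (fun x => (ν (Ioi (c * x))).toReal / (ν (Ioi x)).toReal) atTop (𝓝 r)) :
    Tendsto (fun x => ν (Ioi (c * x)) / ν (Ioi x)) atTop (𝓝 (ENNReal.ofReal r)) := by
  refine (ENNReal.tendsto_ofReal h).congr fun x => ?_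
  rw [ENNReal.ofReal_div_of_pos (ENNReal.toReal_pos (hpos x) (measure_ne_top _ _)),
    ENNReal.ofReal_toReal (measure_ne_top _ _), ENNReal.ofReal_toReal (measure_ne_top _ _)]

lemma measurableSet_mul_gt (x : ℝ) : MeasurableSet {p : ℝ × ℝ | p.1 * p.2 > x} :=
  measurableSet_lt measurable_const (measurable_fst.mul measurable_snd)

lemma setOf_mul_gt_eq_Ioi {s : ℝ} (hs : 0 < s) (x : ℝ) : {t : ℝ | s * t > x} = Ioi (x / s) := by
  ext t
  simp [div_lt_iff₀' hs]

lemma measure_mul_gt_le [IsProbabilityMeasure ν] {c y T : ℝ} {K : ℝ≥0∞} (hc : 0 < c)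
    (hy : 0 < y) (hT : 0 < T) (hνT : ν (Ioi T) ≠ 0)
    (hK : ∀ u ≥ T, ν (Ioi (c * u)) ≤ K * ν (Ioi u)) {s : ℝ} (hs : 0 ≤ s) :
    ν {t | s * t > c * y} ≤ max (ν (Ioi T))⁻¹ K * ν {t | s * t > y} := by
  rcases hs.eq_or_lt with rfl | hs
  · simp [(mul_pos hc hy).le.not_gt]
  by_cases hsT : y / T < s
  · have hsub : Ioi T ⊆ {t | s * t > y} := fun t (ht : T < t) => by
      rw [div_lt_iff₀ hT] at hsT
      show y < s * t
      nlinarith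
    calc ν {t | s * t > c * y} ≤ 1 := prob_le_one
      _ = (ν (Ioi T))⁻¹ * ν (Ioi T) := (ENNReal.inv_mul_cancel hνT (measure_ne_top _ _)).symm
      _ ≤ max (ν (Ioi T))⁻¹ K * ν {t | s * t > y} := by gcongr; exact le_max_left _ _
  · have hTu : T ≤ y / s := by
      rw [not_lt, le_div_iff₀ hT] at hsT
      rwa [le_div_iff₀ hs, mul_comm]
    rw [setOf_mul_gt_eq_Ioi hs, setOf_mul_gt_eq_Ioi hs, mul_div_assoc]
    exact (hK _ hTu).trans (by gcongr; exact le_max_right _ _)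

lemma prod_measure_mul_gt_le [IsProbabilityMeasure ν] {c y T : ℝ} {K : ℝ≥0∞} (hc : 0 < c)
    (hy : 0 < y) (hT : 0 < T) (hνT : ν (Ioi T) ≠ 0)
    (hK : ∀ u ≥ T, ν (Ioi (c * u)) ≤ K * ν (Ioi u)) (h0 : ∀ᵐ s ∂μ, 0 ≤ s) :
    (μ.prod ν) {p | p.1 * p.2 > c * y} ≤
      max (ν (Ioi T))⁻¹ K * (μ.prod ν) {p | p.1 * p.2 > y} := by
  rw [Measure.prod_apply (measurableSet_mul_gt _), Measure.prod_apply (measurableSet_mul_gt _),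
    ← lintegral_const_mul _ (measurable_measure_prodMk_left (measurableSet_mul_gt y))]
  exact lintegral_mono_ae (h0.mono fun s hs => measure_mul_gt_le hc hy hT hνT hK hs)

lemma prod_measure_mul_gt_ne_zero [SFinite ν] (hμ : ∀ x, μ (Ioi x) ≠ 0)
    (hν : ∀ x, ν (Ioi x) ≠ 0) (x : ℝ) : (μ.prod ν) {p | p.1 * p.2 > x} ≠ 0 := by
  have hsub : Ioi (max x 1) ×ˢ Ioi 1 ⊆ {p : ℝ × ℝ | p.1 * p.2 > x} := by
    rintro ⟨s, t⟩ ⟨hs, ht⟩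
    simp only [mem_Ioi, max_lt_iff] at hs ht
    show x < s * t
    nlinarith
  intro hx
  have hrect := measure_mono_null hsub hx
  rw [Measure.prod_prod, mul_eq_zero] at hrect
  exact hrect.elim (hμ _) (hν _)

variable (hreg : ∀ c > 0,
  Tendsto (fun x => ν (Ioi (c * x)) / ν (Ioi x)) atTop (𝓝 (ENNReal.ofReal (c ^ (-α)))))
include hreg

lemma tendsto_measure_mul_gt_div (hα : 0 < α) {s : ℝ} (hs : 0 ≤ s) :
    Tendsto (fun x => ν {t | s * t > x} / ν (Ioi x)) atTop (𝓝 (ENNReal.ofReal (s ^ α))) := by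
  rcases hs.eq_or_lt with rfl | hs
  · rw [zero_rpow hα.ne', ENNReal.ofReal_zero]
    refine tendsto_const_nhds.congr' ?_
    filter_upwards [eventually_ge_atTop 0] with x hx
    simp [hx.not_gt]
  · have hinv : s⁻¹ ^ (-α) = s ^ α := by rw [inv_rpow hs.le, rpow_neg hs.le, inv_inv]
    simpa only [setOf_mul_gt_eq_Ioi hs, div_eq_inv_mul, hinv] using hreg s⁻¹ (inv_pos.2 hs)

lemma tendsto_prod_measure_mul_gt_div [SFinite ν] (hα : 0 < α)
    (hpos : ∀ x, ν (Ioi x) ≠ 0) (h0 : ∀ᵐ s ∂μ, 0 ≤ s)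
    (hmoment : ∫⁻ s, ENNReal.ofReal (s ^ α) ∂μ = ∞) :
    Tendsto (fun x => (μ.prod ν) {p | p.1 * p.2 > x} / ν (Ioi x)) atTop (𝓝 ∞) := by
  set f : ℝ → ℝ → ℝ≥0∞ := fun x s => ν {t | s * t > x} / ν (Ioi x)
  have hf : ∀ x, Measurable (f x) := fun x =>
    (measurable_measure_prodMk_left (measurableSet_mul_gt x)).div_const _
  have hint : ∀ x, (μ.prod ν) {p | p.1 * p.2 > x} / ν (Ioi x) = ∫⁻ s, f x s ∂μ := by
    intro x
    rw [Measure.prod_apply (measurableSet_mul_gt x), div_eq_mul_inv,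
      ← lintegral_mul_const' _ _ (ENNReal.inv_ne_top.2 (hpos x))]
    rfl
  have hfatou : ∞ ≤ liminf (fun x => ∫⁻ s, f x s ∂μ) atTop := calc
    ∞ = ∫⁻ s, liminf (fun x => f x s) atTop ∂μ := by
      rw [← hmoment]
      refine lintegral_congr_ae ?_
      filter_upwards [h0] with s hs
      exact (tendsto_measure_mul_gt_div hreg hα hs).liminf_eq.symm
    _ ≤ liminf (fun x => ∫⁻ s, f x s ∂μ) atTop := lintegral_liminf_le hf
  simp_rw [hint]
  exact tendsto_of_le_liminf_of_limsup_le hfatou le_top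

lemma exists_measure_Ioi_mul_le [IsFiniteMeasure ν] {c : ℝ} (hc : 0 < c)
    (hpos : ∀ x, ν (Ioi x) ≠ 0) :
    ∃ T > 0, ∀ u ≥ T, ν (Ioi (c * u)) ≤ (ENNReal.ofReal (c ^ (-α)) + 1) * ν (Ioi u) := by
  have hlt : ENNReal.ofReal (c ^ (-α)) < ENNReal.ofReal (c ^ (-α)) + 1 :=
    ENNReal.lt_add_right ENNReal.ofReal_ne_top one_ne_zero
  obtain ⟨T, hT⟩ := eventually_atTop.1 ((hreg c hc).eventually_lt_const hlt)
  refine ⟨max T 1, by positivity, fun u hu => ?_⟩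
  exact (ENNReal.div_le_iff (hpos u) (measure_ne_top _ _)).1
    (hT u ((le_max_left _ _).trans hu)).le

lemma isBigO_prod_measure_mul_gt [IsFiniteMeasure μ] [IsProbabilityMeasure ν]
    (hpos : ∀ x, ν (Ioi x) ≠ 0) (h0 : ∀ᵐ s ∂μ, 0 ≤ s) {c : ℝ} (hc : 0 < c) :
    (fun y => ((μ.prod ν) {p | p.1 * p.2 > c * y}).toReal) =O[atTop]
      (fun y => ((μ.prod ν) {p | p.1 * p.2 > y}).toReal) := by
  obtain ⟨T, hT, hK⟩ := exists_measure_Ioi_mul_le hreg hc hpos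
  set C := max (ν (Ioi T))⁻¹ (ENNReal.ofReal (c ^ (-α)) + 1)
  have hC : C ≠ ∞ := max_ne_top (ENNReal.inv_ne_top.2 (hpos T)) (by simp)
  refine Asymptotics.IsBigO.of_bound C.toReal ?_
  filter_upwards [eventually_gt_atTop 0] with y hy
  simp only [Real.norm_eq_abs, ENNReal.abs_toReal, ← ENNReal.toReal_mul]
  exact ENNReal.toReal_mono (ENNReal.mul_ne_top hC (measure_ne_top _ _))
    (prod_measure_mul_gt_le hc hy hT (hpos T) hK h0)

end TailsOnReals

theorem stmt10 (α : ℝ) (hα : 0 < α) (μ : Measure ℝ) [IsProbabilityMeasure μ]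
    (L : ℝ → ℝ) (hL : SlowlyVarying L)
    (hnonneg : μ {t : ℝ | t < 0} = 0)
    (htail : ∀ x > (0 : ℝ), (μ {t : ℝ | t > x}).toReal = x ^ (-α) * L x)
    (hmoment : ∫⁻ x, ENNReal.ofReal (x ^ α) ∂μ = ⊤) :
    Tendsto (fun x : ℝ =>
      (μ {t : ℝ | t > x}).toReal
        / ((μ.prod μ) {p : ℝ × ℝ | p.1 * p.2 > x}).toReal) atTop (nhds 0) ∧
    ∀ a a2 : ℕ → ℝ, (∀ n, 0 < a n) → (∀ n, 0 < a2 n) →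
      Tendsto (fun n : ℕ =>
        (n : ℝ) * (μ {t : ℝ | t > Real.sqrt (a n)}).toReal) atTop (nhds 1) →
      Tendsto (fun n : ℕ =>
        (n : ℝ) * ((μ.prod μ) {p : ℝ × ℝ | p.1 * p.2 > Real.sqrt (a2 n)}).toReal)
        atTop (nhds 1) →
      Tendsto (fun n : ℕ => a n / a2 n) atTop (nhds 0) := by
  have h0 : ∀ᵐ t ∂μ, 0 ≤ t := ae_iff.2 (by simpa only [not_le] using hnonneg)
  have hpos := measure_Ioi_ne_zero_of_lintegral_rpow_eq_top hα.le h0 hmoment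
  have hreg : ∀ c > 0, Tendsto (fun x => μ (Ioi (c * x)) / μ (Ioi x)) atTop
      (𝓝 (ENNReal.ofReal (c ^ (-α)))) := fun c hc =>
    tendsto_measure_Ioi_mul_div hpos (tendsto_div_of_eq_rpow_mul_slowlyVarying hL htail hc)
  have hratio := tendsto_toReal_div_of_tendsto_div_top hpos (fun _ => measure_ne_top _ _)
    (tendsto_prod_measure_mul_gt_div hreg hα hpos h0 hmoment)
  refine ⟨hratio, fun a a2 ha ha2 h1 h2 => ?_⟩
  have hF : Antitone fun x => (μ (Ioi x)).toReal := fun x y hxy =>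
    ENNReal.toReal_mono (measure_ne_top _ _) (measure_mono (Ioi_subset_Ioi hxy))
  have hG : Antitone fun x => ((μ.prod μ) {p : ℝ × ℝ | p.1 * p.2 > x}).toReal := fun x y hxy =>
    ENNReal.toReal_mono (measure_ne_top _ _) (measure_mono fun p hp => hxy.trans_lt hp)
  have hsqrt := tendsto_div_zero_of_natCast_mul_tendsto_one hF
    (fun x => ENNReal.toReal_pos (hpos x) (measure_ne_top _ _)) hG
    (fun x => ENNReal.toReal_pos (prod_measure_mul_gt_ne_zero hpos hpos x) (measure_ne_top _ _))
    (fun c hc => isBigO_prod_measure_mul_gt hreg hpos h0 hc) hratio (fun n => sqrt_nonneg _) h1 h2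
  simpa [div_pow, sq_sqrt (ha _).le, sq_sqrt (ha2 _).le] using hsqrt.pow 2
end

section
/- With the same setup, the triangle probability is negligible compared with the two-star probability: P(X_1 X_2 > a_n, X_2 X_3 > a_n, X_1 X_3 > a_n) = o(1/(n^γ log n)) as n → ∞. -/
/-!
On the triangle event every pairwise product exceeds `t`, so `(X₁X₂X₃)² ≥ t³`. Markov's inequality
for `|X₁X₂X₃|^β` with `β = 3α/4 < α`, whose expectation is `(α/(α-β))³ = 64`, bounds the probability
by `64 t^(-9α/8)`. For `t = a_n` this is `64 (n^γ log n)^(-9/8)`: the exponent beats `1` by `1/8`.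
-/

open MeasureTheory Filter Real Set

open scoped ENNReal

instance inst_s12 (α : ℝ) : SFinite (paretoMeasure α) := by
  unfold paretoMeasure; infer_instance

def triangleSet (t : ℝ) : Set (ℝ × ℝ × ℝ) :=
  {p | p.1 * p.2.1 > t ∧ p.2.1 * p.2.2 > t ∧ p.1 * p.2.2 > t}

theorem rpow_le_abs_rpow_mul_of_lt_mul {t x y z β : ℝ} (ht : 0 ≤ t) (hβ : 0 ≤ β)
    (hxy : t < x * y) (hyz : t < y * z) (hxz : t < x * z) :
    t ^ (3 * β / 2) ≤ |x| ^ β * (|y| ^ β * |z| ^ β) := by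
  have hcube : t ^ 3 ≤ |x * y * z| ^ 2 := by
    calc t ^ 3 = t * t * t := by ring
      _ ≤ (x * y) * (y * z) * (x * z) := by
        have hxy0 : 0 ≤ x * y := by linarith
        have hyz0 : 0 ≤ y * z := by linarith
        gcongr
      _ = |x * y * z| ^ 2 := by rw [sq_abs]; ring
  calc t ^ (3 * β / 2) = (t ^ 3) ^ (β / 2) := by
        rw [← Real.rpow_natCast, ← Real.rpow_mul ht]; ring_nf
    _ ≤ (|x * y * z| ^ 2) ^ (β / 2) := by gcongr
    _ = |x| ^ β * (|y| ^ β * |z| ^ β) := by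
        rw [← Real.rpow_natCast, ← Real.rpow_mul (abs_nonneg _), abs_mul, abs_mul,
          Real.mul_rpow (by positivity) (abs_nonneg _), Real.mul_rpow (abs_nonneg _) (abs_nonneg _)]
        ring_nf

theorem ofReal_rpow_mul_measure_triangleSet_le (μ : Measure ℝ) [SFinite μ] {β t : ℝ}
    (hβ : 0 ≤ β) (ht : 0 ≤ t) :
    ENNReal.ofReal (t ^ (3 * β / 2)) * μ.prod (μ.prod μ) (triangleSet t) ≤
      (∫⁻ x, ENNReal.ofReal (|x| ^ β) ∂μ) ^ 3 := by
  set f : ℝ → ℝ≥0∞ := fun x => ENNReal.ofReal (|x| ^ β)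
  have hf : Measurable f := by fun_prop
  calc ENNReal.ofReal (t ^ (3 * β / 2)) * μ.prod (μ.prod μ) (triangleSet t)
      ≤ ENNReal.ofReal (t ^ (3 * β / 2)) *
          μ.prod (μ.prod μ) {p | ENNReal.ofReal (t ^ (3 * β / 2)) ≤ f p.1 * (f p.2.1 * f p.2.2)} := by
        gcongr
        rintro ⟨x, y, z⟩ ⟨hxy, hyz, hxz⟩
        simp only [f, Set.mem_ofPred_eq]
        rw [← ENNReal.ofReal_mul (by positivity), ← ENNReal.ofReal_mul (by positivity)]
        exact ENNReal.ofReal_le_ofReal (rpow_le_abs_rpow_mul_of_lt_mul ht hβ hxy hyz hxz)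
    _ ≤ ∫⁻ p, f p.1 * (f p.2.1 * f p.2.2) ∂μ.prod (μ.prod μ) :=
        mul_meas_ge_le_lintegral (by fun_prop) _
    _ = (∫⁻ x, f x ∂μ) ^ 3 := by
        rw [lintegral_prod_mul (g := fun q : ℝ × ℝ => f q.1 * f q.2) hf.aemeasurable (by fun_prop),
          lintegral_prod_mul hf.aemeasurable hf.aemeasurable]
        ring

theorem lintegral_abs_rpow_paretoMeasure {α β : ℝ} (hα : 0 < α) (hβ : β < α) :
    ∫⁻ x, ENNReal.ofReal (|x| ^ β) ∂paretoMeasure α = ENNReal.ofReal (α / (α - β)) := by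
  have hdens : (fun x : ℝ => ENNReal.ofReal (if 1 ≤ x then α * x ^ (-α - 1) else 0)) =
      (Ici 1).indicator fun x => ENNReal.ofReal (α * x ^ (-α - 1)) := by
    ext x; by_cases hx : 1 ≤ x <;> simp [hx]
  rw [paretoMeasure, hdens, withDensity_indicator measurableSet_Ici,
    lintegral_withDensity_eq_lintegral_mul _ (by fun_prop) (by fun_prop),
    ← setLIntegral_congr Ioi_ae_eq_Ici]
  have hint : IntegrableOn (fun x : ℝ => α * x ^ (β - α - 1)) (Ioi 1) :=
    (integrableOn_Ioi_rpow_of_lt (by linarith) one_pos).const_mul α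
  calc ∫⁻ x in Ioi 1, ((fun x => ENNReal.ofReal (α * x ^ (-α - 1))) * fun x => ENNReal.ofReal (|x| ^ β)) x
      = ∫⁻ x in Ioi 1, ENNReal.ofReal (α * x ^ (β - α - 1)) := by
        refine setLIntegral_congr_fun measurableSet_Ioi fun x (hx : 1 < x) => ?_
        have hx0 : 0 < x := one_pos.trans hx
        rw [Pi.mul_apply, ← ENNReal.ofReal_mul (by positivity), abs_of_pos hx0, mul_assoc,
          ← Real.rpow_add hx0]
        ring_nf
    _ = ENNReal.ofReal (∫ x in Ioi 1, α * x ^ (β - α - 1)) :=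
        (ofReal_integral_eq_lintegral_ofReal hint
          ((ae_restrict_mem measurableSet_Ioi).mono fun x (hx : 1 < x) => by
            have := one_pos.trans hx; positivity)).symm
    _ = ENNReal.ofReal (α / (α - β)) := by
        rw [integral_const_mul, integral_Ioi_rpow_of_lt (by linarith) one_pos, Real.one_rpow]
        congr 1
        rw [show β - α - 1 + 1 = -(α - β) by ring]
        field_simp

theorem toReal_paretoMeasure_triangleSet_le {α t : ℝ} (hα : 0 < α) (ht : 0 < t) :
    ((paretoMeasure α).prod ((paretoMeasure α).prod (paretoMeasure α)) (triangleSet t)).toReal ≤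
      64 * t ^ (-(9 * α / 8)) := by
  have h := ofReal_rpow_mul_measure_triangleSet_le (paretoMeasure α) (β := 3 * α / 4)
    (by positivity) ht.le
  rw [lintegral_abs_rpow_paretoMeasure hα (by linarith),
    show α / (α - 3 * α / 4) = 4 by field_simp; ring] at h
  have h' := ENNReal.toReal_mono (by finiteness) h
  rw [ENNReal.toReal_mul, ENNReal.toReal_ofReal (by positivity), ENNReal.toReal_pow,
    ENNReal.toReal_ofReal (by norm_num), show 3 * (3 * α / 4) / 2 = 9 * α / 8 by ring] at h'
  rw [Real.rpow_neg ht.le, ← div_eq_mul_inv, le_div_iff₀ (by positivity)]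
  linarith

theorem stmt12 (α γ : ℝ) (hα : 0 < α) (hγ : 0 < γ) :
    Tendsto (fun n : ℕ =>
      (n : ℝ) ^ γ * Real.log n *
        (((paretoMeasure α).prod ((paretoMeasure α).prod (paretoMeasure α)))
          {p : ℝ × ℝ × ℝ | p.1 * p.2.1 > aSeq α γ n ∧ p.2.1 * p.2.2 > aSeq α γ n ∧
            p.1 * p.2.2 > aSeq α γ n}).toReal)
      atTop (nhds 0) := by
  have hA : Tendsto (fun n : ℕ => (n : ℝ) ^ γ * Real.log n) atTop atTop :=
    ((tendsto_rpow_atTop hγ).atTop_mul_atTop₀ Real.tendsto_log_atTop).comp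
      tendsto_natCast_atTop_atTop
  have hbound : Tendsto (fun n : ℕ => 64 * ((n : ℝ) ^ γ * Real.log n) ^ (-(1 / 8) : ℝ))
      atTop (nhds 0) := by
    simpa using ((tendsto_rpow_neg_atTop (by norm_num : (0 : ℝ) < 1 / 8)).comp hA).const_mul 64
  refine squeeze_zero' (Eventually.of_forall fun n => by positivity) ?_ hbound
  filter_upwards [hA.eventually_ge_atTop 1] with n hn
  set A := (n : ℝ) ^ γ * Real.log n
  have hA0 : 0 < A := one_pos.trans_le hn
  have ht : aSeq α γ n ^ (-(9 * α / 8)) = A ^ (-(9 / 8) : ℝ) := by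
    rw [aSeq, ← Real.rpow_mul hA0.le]
    field_simp
  calc A * ((paretoMeasure α).prod ((paretoMeasure α).prod (paretoMeasure α))
        (triangleSet (aSeq α γ n))).toReal
      ≤ A * (64 * A ^ (-(9 / 8) : ℝ)) := by
        rw [← ht]
        gcongr
        exact toReal_paretoMeasure_triangleSet_le hα (Real.rpow_pos_of_pos hA0 _)
    _ = 64 * A ^ (-(1 / 8) : ℝ) := by
        rw [mul_left_comm, ← Real.rpow_one_add' hA0.le (by norm_num)]
        norm_num
end

section
/- In the modified model with Bernoulli edges (connection probability min{1, X_i X_j / a_n}), at the super-critical regime with α > 1: conditional on all X_i < √a_n, the probability that a fixed vertex X_1 is non-isolated is asymptotically 1 when n/a_n → ∞ (γ < α), and asymptotically (α/(α−1))² · n/a_n when n/a_n → 0 (γ ≥ α). -/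
/-!
Integrating out the neighbour, `∫_{y ≤ √a} (1 - x y / a) dF(y) = C - x q` with
`C = P(X ≤ √a) = 1 - a^(-α/2)` and `q = E[X; X ≤ √a] / a`, so the probability equals
`∫₁^√a α x^(-α-1) (C^m - (C - x q)^m) dx` with `m = n - 1`. As `γ > 2`, `n a^(-α/2) → 0`, so
`C^m → 1` by Bernoulli's inequality.

If `n / a → ∞`, then `(C - q)^m ≤ exp (-m q) → 0`, and the integrand is squeezed between
`C^m - (C - q)^m` times the density and the density itself: the limit is `1`.

If `n / a → 0`, the mean value bounds `m x q (C - t q)^(m-1) ≤ C^m - (C - x q)^m ≤ m x q`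
(for `x ≤ t`) integrate to `m q E[X; X ≤ t] (C - t q)^(m-1) ≤ P ≤ m q E[X; X ≤ √a]`.
For `t = √(a / n)` both `t → ∞` and `n t q → 0`, so both sides are `∼ (α/(α-1))² n / a`.

Which regime occurs is read off from `a^α = n^γ log n`.
-/

open MeasureTheory Filter Real Set

open Topology

theorem mul_pow_sub_one_mul_sub_le_pow_sub_pow {R : Type*} [CommRing R] [LinearOrder R]
    [IsStrictOrderedRing R] {u v : R} (hu : 0 ≤ u) (huv : u ≤ v) (m : ℕ) :
    m * u ^ (m - 1) * (v - u) ≤ v ^ m - u ^ m := by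
  have hsum : ∑ i ∈ Finset.range m, u ^ i * u ^ (m - 1 - i) = m * u ^ (m - 1) := by
    rw [Finset.sum_congr rfl fun i hi => by
      rw [← pow_add, Nat.add_sub_cancel' (Nat.le_sub_one_of_lt (Finset.mem_range.1 hi))]]
    simp
  rw [← geom_sum₂_mul, ← hsum]
  gcongr

theorem pow_sub_pow_le_mul_sub {R : Type*} [CommRing R] [LinearOrder R]
    [IsStrictOrderedRing R] {u v : R} (hu : 0 ≤ u) (huv : u ≤ v) (hv : v ≤ 1) (m : ℕ) :
    v ^ m - u ^ m ≤ m * (v - u) := by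
  have h := abs_pow_sub_pow_le v u m
  rw [abs_of_nonneg (sub_nonneg.2 (pow_le_pow_left₀ hu huv m)), abs_of_nonneg (sub_nonneg.2 huv),
    abs_of_nonneg hu, abs_of_nonneg (hu.trans huv), max_eq_left huv] at h
  calc v ^ m - u ^ m ≤ (v - u) * m * v ^ (m - 1) := h
    _ ≤ (v - u) * m * 1 := by gcongr; exact pow_le_one₀ (hu.trans huv) hv
    _ = m * (v - u) := by ring

noncomputable def paretoCdf (α s : ℝ) : ℝ := 1 - s ^ (-α)

noncomputable def paretoTruncMean (α s : ℝ) : ℝ := α / (α - 1) * (1 - s ^ (1 - α))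

lemma zero_notMem_uIcc_one {s : ℝ} (hs : 1 ≤ s) : (0 : ℝ) ∉ uIcc 1 s := by
  rw [uIcc_of_le hs]
  exact fun h => absurd h.1 (by norm_num)

lemma integrableOn_const_mul_rpow_Ioc_one (c r : ℝ) {s : ℝ} (hs : 1 ≤ s) :
    IntegrableOn (fun x : ℝ => c * x ^ r) (Ioc 1 s) := by
  rw [← intervalIntegrable_iff_integrableOn_Ioc_of_le hs]
  exact (intervalIntegral.intervalIntegrable_rpow (Or.inr (zero_notMem_uIcc_one hs))).const_mul c

lemma setIntegral_const_mul_rpow_Ioc_one (c : ℝ) {r s : ℝ} (hr : r ≠ -1) (hs : 1 ≤ s) :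
    ∫ x in Ioc 1 s, c * x ^ r = c * ((s ^ (r + 1) - 1) / (r + 1)) := by
  rw [← intervalIntegral.integral_of_le hs, intervalIntegral.integral_const_mul,
    integral_rpow (Or.inr ⟨hr, zero_notMem_uIcc_one hs⟩), one_rpow]

lemma setIntegral_pareto_density {α s : ℝ} (hα : α ≠ 0) (hs : 1 ≤ s) :
    ∫ x in Ioc 1 s, α * x ^ (-α - 1) = paretoCdf α s := by
  rw [setIntegral_const_mul_rpow_Ioc_one α (by contrapose! hα; linarith) hs, paretoCdf,
    show -α - 1 + 1 = -α by ring]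
  field_simp
  ring

lemma setIntegral_pareto_firstMoment {α s : ℝ} (hα : α ≠ 1) (hs : 1 ≤ s) :
    ∫ x in Ioc 1 s, α * x ^ (-α) = paretoTruncMean α s := by
  have : α - 1 ≠ 0 := sub_ne_zero.2 hα
  rw [setIntegral_const_mul_rpow_Ioc_one α (by contrapose! hα; linarith) hs, paretoTruncMean,
    show -α + 1 = 1 - α by ring]
  field_simp
  ring

lemma rpow_neg_sub_one_mul_self {x : ℝ} (hx : 0 < x) (α : ℝ) : x ^ (-α - 1) * x = x ^ (-α) := by
  rw [← rpow_add_one hx.ne']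
  ring_nf

lemma setIntegral_one_sub_mul_pareto_density {α s : ℝ} (hα₀ : α ≠ 0) (hα₁ : α ≠ 1) (hs : 1 ≤ s)
    (x a : ℝ) :
    ∫ y in Ioc 1 s, (1 - x * y / a) * (α * y ^ (-α - 1)) =
      paretoCdf α s - x / a * paretoTruncMean α s := by
  have hsplit : ∀ y ∈ Ioc (1 : ℝ) s,
      (1 - x * y / a) * (α * y ^ (-α - 1)) = α * y ^ (-α - 1) - x / a * (α * y ^ (-α)) := by
    intro y hy
    rw [← rpow_neg_sub_one_mul_self (one_pos.trans hy.1)]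
    ring
  rw [setIntegral_congr_fun measurableSet_Ioc hsplit,
    integral_sub (integrableOn_const_mul_rpow_Ioc_one α _ hs)
      ((integrableOn_const_mul_rpow_Ioc_one α _ hs).const_mul _),
    integral_const_mul (x / a), setIntegral_pareto_density hα₀ hs,
    setIntegral_pareto_firstMoment hα₁ hs]

section ParetoBounds

variable {α s : ℝ}

lemma paretoCdf_le_one (hs : 0 ≤ s) : paretoCdf α s ≤ 1 :=
  sub_le_self 1 (rpow_nonneg hs _)

lemma paretoTruncMean_nonneg (hα : 1 < α) (hs : 1 ≤ s) : 0 ≤ paretoTruncMean α s :=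
  mul_nonneg (div_nonneg (by linarith) (by linarith))
    (sub_nonneg.2 (rpow_le_one_of_one_le_of_nonpos hs (by linarith)))

lemma paretoTruncMean_le (hα : 1 < α) (hs : 0 ≤ s) : paretoTruncMean α s ≤ α / (α - 1) :=
  mul_le_of_le_one_right (div_nonneg (by linarith) (by linarith)) (sub_le_self 1 (rpow_nonneg hs _))

lemma tendsto_paretoCdf (hα : 0 < α) : Tendsto (paretoCdf α) atTop (𝓝 1) := by
  have h := (tendsto_const_nhds (x := (1 : ℝ))).sub (tendsto_rpow_neg_atTop hα)
  rw [sub_zero] at h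
  exact h

lemma tendsto_paretoTruncMean (hα : 1 < α) :
    Tendsto (paretoTruncMean α) atTop (𝓝 (α / (α - 1))) := by
  have h := tendsto_rpow_neg_atTop (show 0 < α - 1 by linarith)
  rw [neg_sub] at h
  have h' := (tendsto_const_nhds (x := α / (α - 1))).mul ((tendsto_const_nhds (x := (1 : ℝ))).sub h)
  rw [sub_zero, mul_one] at h'
  exact h'

end ParetoBounds

noncomputable def paretoPowGap (α s C q : ℝ) (m : ℕ) : ℝ :=
  ∫ x in Ioc 1 s, α * x ^ (-α - 1) * (C ^ m - (C - x * q) ^ m)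

section PowGap

variable {α s C q : ℝ}

lemma integrableOn_paretoPowGap (m : ℕ) :
    IntegrableOn (fun x => α * x ^ (-α - 1) * (C ^ m - (C - x * q) ^ m)) (Ioc 1 s) := by
  refine (ContinuousOn.integrableOn_Icc ?_).mono_set Ioc_subset_Icc_self
  refine (continuousOn_const.mul fun x hx => ?_).mul (by fun_prop)
  exact (continuousAt_rpow_const x _ (Or.inl (by linarith [hx.1]))).continuousWithinAt

lemma sub_mul_nonneg_of_mem_Ioc (hq : 0 ≤ q) (hsq : s * q ≤ C) {x : ℝ} (hx : x ∈ Ioc 1 s) :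
    0 ≤ C - x * q := by
  nlinarith [hx.2]

lemma pareto_density_nonneg (hα : 0 < α) {x : ℝ} (hx : x ∈ Ioc 1 s) : 0 ≤ α * x ^ (-α - 1) :=
  mul_nonneg hα.le (rpow_nonneg (by linarith [hx.1]) _)

lemma mul_paretoCdf_le_paretoPowGap (hα : 0 < α) (hs : 1 ≤ s) (hq : 0 ≤ q) (hsq : s * q ≤ C)
    (m : ℕ) : (C ^ m - (C - q) ^ m) * paretoCdf α s ≤ paretoPowGap α s C q m := by
  rw [← setIntegral_pareto_density hα.ne' hs, ← integral_const_mul]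
  refine setIntegral_mono_on ((integrableOn_const_mul_rpow_Ioc_one α _ hs).const_mul _)
    (integrableOn_paretoPowGap m) measurableSet_Ioc fun x hx => ?_
  have := sub_mul_nonneg_of_mem_Ioc hq hsq hx
  have := pareto_density_nonneg hα hx
  rw [mul_comm]
  gcongr
  nlinarith [hx.1]

lemma paretoPowGap_le_one (hα : 0 < α) (hs : 1 ≤ s) (hq : 0 ≤ q) (hsq : s * q ≤ C) (hC : C ≤ 1)
    (m : ℕ) : paretoPowGap α s C q m ≤ 1 := by
  calc paretoPowGap α s C q m ≤ ∫ x in Ioc 1 s, α * x ^ (-α - 1) := by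
        refine setIntegral_mono_on (integrableOn_paretoPowGap m)
          (integrableOn_const_mul_rpow_Ioc_one α _ hs) measurableSet_Ioc fun x hx => ?_
        have hCx := sub_mul_nonneg_of_mem_Ioc hq hsq hx
        have : C ^ m ≤ 1 := pow_le_one₀ (by nlinarith [hx.1]) hC
        have : 0 ≤ (C - x * q) ^ m := pow_nonneg hCx m
        have := pareto_density_nonneg hα hx
        nlinarith
    _ = paretoCdf α s := setIntegral_pareto_density hα.ne' hs
    _ ≤ 1 := paretoCdf_le_one (by linarith)

lemma paretoPowGap_le (hα : 1 < α) (hs : 1 ≤ s) (hq : 0 ≤ q) (hsq : s * q ≤ C) (hC : C ≤ 1)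
    (m : ℕ) : paretoPowGap α s C q m ≤ m * q * paretoTruncMean α s := by
  rw [← setIntegral_pareto_firstMoment hα.ne' hs, ← integral_const_mul]
  refine setIntegral_mono_on (integrableOn_paretoPowGap m)
    ((integrableOn_const_mul_rpow_Ioc_one α _ hs).const_mul _) measurableSet_Ioc fun x hx => ?_
  have hx0 : 0 < x := one_pos.trans hx.1
  have hgap := pow_sub_pow_le_mul_sub (sub_mul_nonneg_of_mem_Ioc hq hsq hx)
    (by nlinarith : C - x * q ≤ C) hC m
  calc α * x ^ (-α - 1) * (C ^ m - (C - x * q) ^ m)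
      ≤ α * x ^ (-α - 1) * (m * (x * q)) := by
        rw [sub_sub_cancel] at hgap
        exact mul_le_mul_of_nonneg_left hgap (pareto_density_nonneg (by linarith) hx)
    _ = m * q * (α * x ^ (-α)) := by
        rw [← rpow_neg_sub_one_mul_self hx0]
        ring

lemma mul_paretoTruncMean_le_paretoPowGap (hα : 1 < α) (hs : 1 ≤ s) (hq : 0 ≤ q)
    (hsq : s * q ≤ C) (m : ℕ) :
    m * q * (C - s * q) ^ (m - 1) * paretoTruncMean α s ≤ paretoPowGap α s C q m := by
  rw [← setIntegral_pareto_firstMoment hα.ne' hs, ← integral_const_mul]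
  refine setIntegral_mono_on ((integrableOn_const_mul_rpow_Ioc_one α _ hs).const_mul _)
    (integrableOn_paretoPowGap m) measurableSet_Ioc fun x hx => ?_
  have hx0 : 0 < x := one_pos.trans hx.1
  have hCx := sub_mul_nonneg_of_mem_Ioc hq hsq hx
  have hgap := mul_pow_sub_one_mul_sub_le_pow_sub_pow hCx (by nlinarith : C - x * q ≤ C) m
  rw [sub_sub_cancel] at hgap
  calc m * q * (C - s * q) ^ (m - 1) * (α * x ^ (-α))
      = α * x ^ (-α - 1) * (m * (C - s * q) ^ (m - 1) * (x * q)) := by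
        rw [← rpow_neg_sub_one_mul_self hx0]
        ring
    _ ≤ α * x ^ (-α - 1) * (C ^ m - (C - x * q) ^ m) := by
        refine mul_le_mul_of_nonneg_left (le_trans ?_ hgap) (pareto_density_nonneg (by linarith) hx)
        gcongr
        exact hx.2

lemma paretoPowGap_mono {t : ℝ} (hα : 0 < α) (hts : t ≤ s) (hq : 0 ≤ q) (hsq : s * q ≤ C)
    (m : ℕ) : paretoPowGap α t C q m ≤ paretoPowGap α s C q m := by
  refine setIntegral_mono_set (integrableOn_paretoPowGap m) ?_
    (Ioc_subset_Ioc_right hts).eventuallyLE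
  filter_upwards [ae_restrict_mem measurableSet_Ioc] with x hx
  have hCx := sub_mul_nonneg_of_mem_Ioc hq hsq hx
  have := pareto_density_nonneg hα hx
  have : (C - x * q) ^ m ≤ C ^ m := pow_le_pow_left₀ hCx (by nlinarith [hx.1]) m
  exact mul_nonneg (by assumption) (by linarith)

end PowGap

noncomputable def nonIsolatedProb (α a : ℝ) (m : ℕ) : ℝ :=
  ∫ x in Ioc 1 √a, α * x ^ (-α - 1) *
    ((1 - a ^ (-α / 2)) ^ m - (∫ y in Ioc 1 √a, (1 - x * y / a) * (α * y ^ (-α - 1))) ^ m)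

noncomputable def connRate (α a : ℝ) : ℝ := paretoTruncMean α √a / a

lemma paretoCdf_sqrt {a : ℝ} (ha : 0 ≤ a) (α : ℝ) : paretoCdf α √a = 1 - a ^ (-α / 2) := by
  rw [paretoCdf, sqrt_eq_rpow, ← rpow_mul ha]
  ring_nf

lemma nonIsolatedProb_eq_paretoPowGap {α a : ℝ} (hα₀ : α ≠ 0) (hα₁ : α ≠ 1) (ha : 1 ≤ a)
    (m : ℕ) : nonIsolatedProb α a m = paretoPowGap α √a (paretoCdf α √a) (connRate α a) m := by
  refine setIntegral_congr_fun measurableSet_Ioc fun x _ => ?_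
  rw [setIntegral_one_sub_mul_pareto_density hα₀ hα₁ (one_le_sqrt.2 ha),
    paretoCdf_sqrt (zero_le_one.trans ha), connRate]
  ring

section LargeA

variable {α : ℝ}

lemma eventually_paretoPowGap_hyps (hα : 1 < α) : ∀ᶠ a in atTop,
    1 ≤ a ∧ 0 ≤ connRate α a ∧ √a * connRate α a ≤ paretoCdf α √a := by
  have hsmall : Tendsto (fun a => paretoTruncMean α √a / √a) atTop (𝓝 0) :=
    ((tendsto_paretoTruncMean hα).comp tendsto_sqrt_atTop).div_atTop tendsto_sqrt_atTop
  filter_upwards [eventually_ge_atTop 1,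
    hsmall.eventually (eventually_lt_nhds (show (0 : ℝ) < 1 / 2 by norm_num)),
    ((tendsto_paretoCdf (by linarith)).comp tendsto_sqrt_atTop).eventually
      (eventually_gt_nhds (show (1 / 2 : ℝ) < 1 by norm_num))] with a ha hK hC
  have hs : 1 ≤ √a := one_le_sqrt.2 ha
  refine ⟨ha, div_nonneg (paretoTruncMean_nonneg hα hs) (by linarith), ?_⟩
  have : √a * connRate α a = paretoTruncMean α √a / √a := by
    rw [connRate]
    field_simp
    rw [sq_sqrt (zero_le_one.trans ha), mul_comm]
  simp only [Function.comp] at hC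
  linarith

lemma eventually_nonIsolatedProb_le_one (hα : 1 < α) :
    ∀ᶠ a in atTop, ∀ m, nonIsolatedProb α a m ≤ 1 := by
  filter_upwards [eventually_paretoPowGap_hyps hα] with a ⟨ha, hq, hsq⟩ m
  rw [nonIsolatedProb_eq_paretoPowGap (by linarith) hα.ne' ha]
  exact paretoPowGap_le_one (by linarith) (one_le_sqrt.2 ha) hq hsq
    (paretoCdf_le_one (sqrt_nonneg a)) m

lemma eventually_nonIsolatedProb_le_mul_div (hα : 1 < α) :
    ∀ᶠ a in atTop, ∀ m : ℕ, nonIsolatedProb α a m ≤ (α / (α - 1)) ^ 2 * m / a := by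
  filter_upwards [eventually_paretoPowGap_hyps hα] with a ⟨ha, hq, hsq⟩ m
  rw [nonIsolatedProb_eq_paretoPowGap (by linarith) hα.ne' ha]
  have hK₀ := paretoTruncMean_nonneg hα (one_le_sqrt.2 ha)
  have hKκ := paretoTruncMean_le hα (sqrt_nonneg a)
  calc paretoPowGap α √a (paretoCdf α √a) (connRate α a) m
      ≤ m * connRate α a * paretoTruncMean α √a :=
        paretoPowGap_le hα (one_le_sqrt.2 ha) hq hsq (paretoCdf_le_one (sqrt_nonneg a)) m
    _ ≤ m * (α / (α - 1) / a) * (α / (α - 1)) := by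
        rw [connRate]
        gcongr
    _ = (α / (α - 1)) ^ 2 * m / a := by ring

lemma eventually_mul_paretoCdf_le_nonIsolatedProb (hα : 1 < α) : ∀ᶠ a in atTop, ∀ m : ℕ,
    (paretoCdf α √a ^ m - (paretoCdf α √a - connRate α a) ^ m) * paretoCdf α √a ≤
      nonIsolatedProb α a m := by
  filter_upwards [eventually_paretoPowGap_hyps hα] with a ⟨ha, hq, hsq⟩ m
  rw [nonIsolatedProb_eq_paretoPowGap (by linarith) hα.ne' ha]
  exact mul_paretoCdf_le_paretoPowGap (by linarith) (one_le_sqrt.2 ha) hq hsq m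

lemma eventually_mul_paretoTruncMean_le_nonIsolatedProb (hα : 1 < α) :
    ∀ᶠ a in atTop, ∀ (m : ℕ) (t : ℝ), 1 ≤ t → t ≤ √a →
      m * connRate α a * (paretoCdf α √a - t * connRate α a) ^ (m - 1) * paretoTruncMean α t ≤
        nonIsolatedProb α a m := by
  filter_upwards [eventually_paretoPowGap_hyps hα] with a ⟨ha, hq, hsq⟩ m t ht hts
  rw [nonIsolatedProb_eq_paretoPowGap (by linarith) hα.ne' ha]
  exact (mul_paretoTruncMean_le_paretoPowGap hα ht hq (by nlinarith) m).trans
    (paretoPowGap_mono (by linarith) hts hq hsq m)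

end LargeA

lemma tendsto_pow_nhds_one_of_natCast_mul_one_sub {r : ℕ → ℝ} {k : ℕ → ℕ} (hk : ∀ n, k n ≤ n)
    (hr₀ : ∀ᶠ n in atTop, 0 ≤ r n) (hr₁ : ∀ᶠ n in atTop, r n ≤ 1)
    (h : Tendsto (fun n => n * (1 - r n)) atTop (𝓝 0)) :
    Tendsto (fun n => r n ^ k n) atTop (𝓝 1) := by
  have hlow : Tendsto (fun n => 1 - n * (1 - r n)) atTop (𝓝 1) := by
    simpa using tendsto_const_nhds.sub h
  refine tendsto_of_tendsto_of_tendsto_of_le_of_le' hlow tendsto_const_nhds ?_ ?_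
  · filter_upwards [hr₀, hr₁] with n h₀ h₁
    have hbern := one_add_mul_le_pow (a := r n - 1) (by linarith) (k n)
    have : (k n : ℝ) * (1 - r n) ≤ n * (1 - r n) :=
      mul_le_mul_of_nonneg_right (by exact_mod_cast hk n) (by linarith)
    rw [add_sub_cancel] at hbern
    linarith
  · filter_upwards [hr₀, hr₁] with n h₀ h₁ using pow_le_one₀ h₀ h₁

lemma tendsto_pow_nhds_zero_of_mul_one_sub {ι : Type*} {l : Filter ι} {r : ι → ℝ} {k : ι → ℕ}
    (hr : ∀ᶠ i in l, 0 ≤ r i) (h : Tendsto (fun i => k i * (1 - r i)) l atTop) :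
    Tendsto (fun i => r i ^ k i) l (𝓝 0) := by
  refine tendsto_of_tendsto_of_tendsto_of_le_of_le' tendsto_const_nhds
    (tendsto_exp_neg_atTop_nhds_zero.comp h) ?_ ?_
  · filter_upwards [hr] with i hi using pow_nonneg hi _
  · filter_upwards [hr] with i hi
    calc r i ^ k i ≤ exp (r i - 1) ^ k i :=
          pow_le_pow_left₀ hi (by linarith [add_one_le_exp (r i - 1)]) _
      _ = exp (-(k i * (1 - r i))) := by rw [← exp_nat_mul]; ring_nf

lemma tendsto_natCast_sub_one_div_natCast :
    Tendsto (fun n : ℕ => ((n - 1 : ℕ) : ℝ) / n) atTop (𝓝 1) := by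
  have h := (tendsto_const_nhds (x := (1 : ℝ))).sub tendsto_one_div_atTop_nhds_zero_nat
  rw [sub_zero] at h
  refine h.congr' ?_
  filter_upwards [eventually_ge_atTop 1] with n hn
  have hn' : (n : ℝ) ≠ 0 := by positivity
  rw [Nat.cast_sub hn, Nat.cast_one]
  field_simp

lemma mul_sqrt_div_mul_div {x y : ℝ} (hx : 0 < x) (hy : 0 < y) (z : ℝ) :
    x * (√(y / x) * (z / y)) = √(x / y) * z := by
  rw [sqrt_div hy.le, sqrt_div hx.le]
  field_simp
  rw [sq_sqrt hy.le, sq_sqrt hx.le]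
  ring

section Regimes

variable {α : ℝ} {a : ℕ → ℝ}

lemma tendsto_natCast_mul_one_sub_paretoCdf (ha : Tendsto a atTop atTop)
    (hb : Tendsto (fun n => n * a n ^ (-α / 2)) atTop (𝓝 0)) :
    Tendsto (fun n => n * (1 - paretoCdf α √(a n))) atTop (𝓝 0) := by
  refine hb.congr' ?_
  filter_upwards [ha.eventually (eventually_ge_atTop 0)] with n hn
  rw [paretoCdf_sqrt hn, sub_sub_cancel]

theorem tendsto_nonIsolatedProb_of_tendsto_div_atTop (hα : 1 < α) (ha : Tendsto a atTop atTop)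
    (hb : Tendsto (fun n => n * a n ^ (-α / 2)) atTop (𝓝 0))
    (hna : Tendsto (fun n => n / a n) atTop atTop) :
    Tendsto (fun n => nonIsolatedProb α (a n) (n - 1)) atTop (𝓝 1) := by
  set C := fun n => paretoCdf α √(a n)
  set q := fun n => connRate α (a n)
  have hev := ha.eventually (eventually_paretoPowGap_hyps hα)
  have hC : Tendsto C atTop (𝓝 1) :=
    (tendsto_paretoCdf (by linarith)).comp (tendsto_sqrt_atTop.comp ha)
  have hC₀ : ∀ᶠ n in atTop, 0 ≤ C n - q n := by
    filter_upwards [hev] with n ⟨h1, hq, hsq⟩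
    nlinarith [one_le_sqrt.2 h1]
  have hCpos : ∀ᶠ n in atTop, 0 ≤ C n := by
    filter_upwards [hev, hC₀] with n ⟨_, hq, _⟩ h
    linarith
  have hCpow : Tendsto (fun n => C n ^ (n - 1)) atTop (𝓝 1) :=
    tendsto_pow_nhds_one_of_natCast_mul_one_sub (fun n => Nat.sub_le n 1) hCpos
      (Eventually.of_forall fun n => paretoCdf_le_one (sqrt_nonneg _))
      (tendsto_natCast_mul_one_sub_paretoCdf ha hb)
  have hm : Tendsto (fun n => ((n - 1 : ℕ) : ℝ) / a n) atTop atTop := by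
    refine (hna.atTop_add ha.inv_tendsto_atTop.neg).congr' ?_
    filter_upwards [eventually_ge_atTop 1] with n hn
    simp only [Pi.inv_apply, Nat.cast_sub hn]
    ring
  have hCqpow : Tendsto (fun n => (C n - q n) ^ (n - 1)) atTop (𝓝 0) := by
    refine tendsto_pow_nhds_zero_of_mul_one_sub hC₀ (tendsto_atTop_mono' _ ?_
      (hm.atTop_mul_pos (div_pos (by linarith) (by linarith))
        ((tendsto_paretoTruncMean hα).comp (tendsto_sqrt_atTop.comp ha))))
    refine Eventually.of_forall fun n => ?_
    calc ((n - 1 : ℕ) : ℝ) / a n * paretoTruncMean α √(a n) = (n - 1 : ℕ) * q n := by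
          simp only [q, connRate]
          ring
      _ ≤ (n - 1 : ℕ) * (1 - (C n - q n)) := by
        gcongr
        linarith [paretoCdf_le_one (α := α) (sqrt_nonneg (a n))]
  refine tendsto_of_tendsto_of_tendsto_of_le_of_le'
    (by simpa using (hCpow.sub hCqpow).mul hC) tendsto_const_nhds ?_ ?_
  · filter_upwards [ha.eventually (eventually_mul_paretoCdf_le_nonIsolatedProb hα)] with n h
      using h _
  · filter_upwards [ha.eventually (eventually_nonIsolatedProb_le_one hα)] with n h using h _

lemma tendsto_sqrt_div_natCast_atTop (ha : Tendsto a atTop atTop)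
    (hna : Tendsto (fun n => n / a n) atTop (𝓝 0)) :
    Tendsto (fun n => √(a n / n)) atTop atTop := by
  have hpos : ∀ᶠ n : ℕ in atTop, 0 < (n : ℝ) / a n := by
    filter_upwards [ha.eventually (eventually_gt_atTop 0), eventually_ge_atTop 1] with n h hn
    exact div_pos (by exact_mod_cast hn) h
  refine tendsto_sqrt_atTop.comp
    ((tendsto_nhdsWithin_iff.2 ⟨hna, hpos⟩).inv_tendsto_nhdsGT_zero.congr fun n => ?_)
  simp

lemma eventually_one_le_sqrt_div_natCast_le_sqrt (ha : Tendsto a atTop atTop)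
    (hna : Tendsto (fun n => n / a n) atTop (𝓝 0)) :
    ∀ᶠ n in atTop, 1 ≤ √(a n / n) ∧ √(a n / n) ≤ √(a n) := by
  filter_upwards [ha.eventually (eventually_ge_atTop 0),
    (tendsto_sqrt_div_natCast_atTop ha hna).eventually (eventually_ge_atTop 1),
    eventually_ge_atTop 1] with n ha₀ ht hn
  exact ⟨ht, sqrt_le_sqrt (div_le_self ha₀ (by exact_mod_cast hn))⟩

lemma tendsto_paretoCdf_sub_sqrt_div_mul_connRate_pow (hα : 1 < α) (ha : Tendsto a atTop atTop)
    (hb : Tendsto (fun n => n * a n ^ (-α / 2)) atTop (𝓝 0))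
    (hna : Tendsto (fun n => n / a n) atTop (𝓝 0)) :
    Tendsto (fun n => (paretoCdf α √(a n) - √(a n / n) * connRate α (a n)) ^ (n - 1 - 1))
      atTop (𝓝 1) := by
  have hsqrt : Tendsto (fun n => √(n / a n)) atTop (𝓝 0) := by
    have := (continuous_sqrt.tendsto 0).comp hna
    rwa [sqrt_zero] at this
  have hgap := (tendsto_natCast_mul_one_sub_paretoCdf ha hb).add
    (hsqrt.mul ((tendsto_paretoTruncMean hα).comp (tendsto_sqrt_atTop.comp ha)))
  rw [zero_mul, add_zero] at hgap
  have hev := ha.eventually (eventually_paretoPowGap_hyps hα)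
  have hts := eventually_one_le_sqrt_div_natCast_le_sqrt ha hna
  refine tendsto_pow_nhds_one_of_natCast_mul_one_sub
    (fun n => (Nat.sub_le _ 1).trans (Nat.sub_le n 1)) ?_ ?_ (hgap.congr' ?_)
  · filter_upwards [hev, hts] with n ⟨_, hq, hsq⟩ ⟨_, hts⟩
    nlinarith
  · filter_upwards [hev, hts] with n ⟨_, hq, _⟩ ⟨ht1, _⟩
    nlinarith [paretoCdf_le_one (α := α) (sqrt_nonneg (a n))]
  · filter_upwards [ha.eventually (eventually_gt_atTop 0), eventually_ge_atTop 1] with n h hn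
    rw [Function.comp_apply, Function.comp_apply,
      ← mul_sqrt_div_mul_div (by exact_mod_cast hn) h, connRate]
    ring

theorem tendsto_nonIsolatedProb_div_of_tendsto_div_zero (hα : 1 < α) (ha : Tendsto a atTop atTop)
    (hb : Tendsto (fun n => n * a n ^ (-α / 2)) atTop (𝓝 0))
    (hna : Tendsto (fun n => n / a n) atTop (𝓝 0)) :
    Tendsto (fun n => nonIsolatedProb α (a n) (n - 1) / ((α / (α - 1)) ^ 2 * n / a n))
      atTop (𝓝 1) := by
  set κ := α / (α - 1)
  have hκ : 0 < κ := div_pos (by linarith) (by linarith)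
  set C := fun n => paretoCdf α √(a n)
  set K := fun n => paretoTruncMean α √(a n)
  set q := fun n => connRate α (a n)
  set t := fun n : ℕ => √(a n / n)
  have hev := ha.eventually (eventually_paretoPowGap_hyps hα)
  have hts := eventually_one_le_sqrt_div_natCast_le_sqrt ha hna
  have hlow : Tendsto (fun n => ((n - 1 : ℕ) : ℝ) / n * (K n / κ) * (paretoTruncMean α (t n) / κ)
      * (C n - t n * q n) ^ (n - 1 - 1)) atTop (𝓝 1) := by
    have hK : Tendsto K atTop (𝓝 κ) :=
      (tendsto_paretoTruncMean hα).comp (tendsto_sqrt_atTop.comp ha)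
    have := ((tendsto_natCast_sub_one_div_natCast.mul (hK.div_const κ)).mul
      (((tendsto_paretoTruncMean hα).comp (tendsto_sqrt_div_natCast_atTop ha hna)).div_const κ)).mul
      (tendsto_paretoCdf_sub_sqrt_div_mul_connRate_pow hα ha hb hna)
    rwa [div_self hκ.ne', one_mul, one_mul, one_mul] at this
  refine tendsto_of_tendsto_of_tendsto_of_le_of_le' hlow tendsto_const_nhds ?_ ?_
  · filter_upwards [ha.eventually (eventually_mul_paretoTruncMean_le_nonIsolatedProb hα), hev, hts,
      eventually_ge_atTop 1] with n hlow ⟨h1, _⟩ ⟨ht1, hta⟩ hn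
    rw [le_div_iff₀ (div_pos (mul_pos (pow_pos hκ 2) (by exact_mod_cast hn)) (by linarith))]
    calc ((n - 1 : ℕ) : ℝ) / n * (K n / κ) * (paretoTruncMean α (t n) / κ)
          * (C n - t n * q n) ^ (n - 1 - 1) * (κ ^ 2 * n / a n)
        = (n - 1 : ℕ) * q n * (C n - t n * q n) ^ (n - 1 - 1) * paretoTruncMean α (t n) := by
          have hn' : (n : ℝ) ≠ 0 := by positivity
          simp only [K, q, connRate]
          field_simp
      _ ≤ nonIsolatedProb α (a n) (n - 1) := hlow (n - 1) (t n) ht1 hta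
  · filter_upwards [ha.eventually (eventually_nonIsolatedProb_le_mul_div hα), hev,
      eventually_ge_atTop 1] with n hup ⟨h1, _⟩ hn
    rw [div_le_one (div_pos (mul_pos (pow_pos hκ 2) (by exact_mod_cast hn)) (by linarith))]
    refine (hup _).trans ?_
    gcongr
    exact Nat.sub_le n 1

end Regimes

lemma mul_rpow_mul_log_rpow_neg {x : ℝ} (hx : 1 < x) (γ : ℝ) {p : ℝ} (hp : p ≠ 0) :
    x * (x ^ γ * log x) ^ (-p) = (x ^ (1 / p - γ) / log x) ^ p := by
  have hx₀ : 0 < x := by linarith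
  have hl : 0 < log x := log_pos hx
  rw [div_rpow (rpow_nonneg hx₀.le _) hl.le, ← rpow_mul hx₀.le,
    mul_rpow (rpow_nonneg hx₀.le _) hl.le, ← rpow_mul hx₀.le, rpow_neg hl.le, sub_mul,
    one_div_mul_cancel hp, rpow_sub hx₀, rpow_one, mul_neg, rpow_neg hx₀.le]
  field_simp

lemma tendsto_rpow_div_log_atTop {e : ℝ} (he : 0 < e) :
    Tendsto (fun x => x ^ e / log x) atTop atTop := by
  refine tendsto_atTop_mono' _ ?_ ((tendsto_rpow_atTop (half_pos he)).const_mul_atTop (half_pos he))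
  filter_upwards [eventually_gt_atTop 1] with x hx
  have hl : 0 < log x := log_pos hx
  have hlog := log_le_rpow_div (by linarith : 0 ≤ x) (half_pos he)
  rw [le_div_iff₀ hl]
  calc e / 2 * x ^ (e / 2) * log x ≤ e / 2 * x ^ (e / 2) * (x ^ (e / 2) / (e / 2)) := by
        gcongr
    _ = x ^ (e / 2) * x ^ (e / 2) := by field_simp
    _ = x ^ e := by rw [← rpow_add (by linarith), add_halves]

lemma tendsto_rpow_div_log_rpow_nhds_zero {e p : ℝ} (he : e ≤ 0) (hp : 0 < p) :
    Tendsto (fun x => (x ^ e / log x) ^ p) atTop (𝓝 0) := by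
  have h : Tendsto (fun x => x ^ e / log x) atTop (𝓝 0) := by
    refine tendsto_of_tendsto_of_tendsto_of_le_of_le' tendsto_const_nhds
      tendsto_log_atTop.inv_tendsto_atTop ?_ ?_
    · filter_upwards [eventually_gt_atTop 1] with x hx
      exact div_nonneg (rpow_nonneg (by linarith) _) (log_pos hx).le
    · filter_upwards [eventually_gt_atTop 1] with x hx
      rw [Pi.inv_apply, ← one_div]
      exact div_le_div_of_nonneg_right (rpow_le_one_of_one_le_of_nonpos hx.le he) (log_pos hx).le
  have := ((continuousAt_rpow_const 0 p (Or.inr hp.le)).tendsto).comp h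
  rwa [zero_rpow hp.ne'] at this

section ASeq

variable {α γ : ℝ}

lemma natCast_mul_aSeq_rpow_neg (hα : α ≠ 0) {p : ℝ} (hp : p ≠ 0) {n : ℕ} (hn : 2 ≤ n) :
    n * aSeq α γ n ^ (-(p * α)) = ((n : ℝ) ^ (1 / p - γ) / log n) ^ p := by
  have hn' : (1 : ℝ) < n := by exact_mod_cast hn
  rw [aSeq, ← rpow_mul (mul_nonneg (rpow_nonneg (by linarith) _) (log_nonneg hn'.le)),
    show 1 / α * -(p * α) = -p by field_simp]
  exact mul_rpow_mul_log_rpow_neg hn' γ hp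

lemma tendsto_aSeq (hα : 0 < α) (hγ : 0 < γ) : Tendsto (aSeq α γ) atTop atTop :=
  (tendsto_rpow_atTop (by positivity)).comp
    (((tendsto_rpow_atTop hγ).atTop_mul_atTop₀ tendsto_log_atTop).comp tendsto_natCast_atTop_atTop)

lemma tendsto_natCast_mul_aSeq_rpow_neg_half (hα : 0 < α) (hγ : 2 < γ) :
    Tendsto (fun n => n * aSeq α γ n ^ (-α / 2)) atTop (𝓝 0) := by
  refine ((tendsto_rpow_div_log_rpow_nhds_zero (e := 1 / (1 / 2) - γ) (p := 1 / 2) (by linarith)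
    (by norm_num)).comp tendsto_natCast_atTop_atTop).congr' ?_
  filter_upwards [eventually_ge_atTop 2] with n hn
  rw [Function.comp_apply, ← natCast_mul_aSeq_rpow_neg hα.ne' (by norm_num) hn]
  ring_nf

lemma natCast_div_aSeq_eq (hα : α ≠ 0) {n : ℕ} (hn : 2 ≤ n) :
    n / aSeq α γ n = ((n : ℝ) ^ (α - γ) / log n) ^ (1 / α) := by
  have h := natCast_mul_aSeq_rpow_neg (γ := γ) hα (one_div_ne_zero hα) hn
  rw [one_div_one_div, one_div_mul_cancel hα, rpow_neg_one] at h
  rw [div_eq_mul_inv, h]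

lemma tendsto_natCast_div_aSeq_atTop (hα : 0 < α) (hγα : γ < α) :
    Tendsto (fun n => n / aSeq α γ n) atTop atTop := by
  refine (((tendsto_rpow_atTop (y := 1 / α) (by positivity)).comp
    (tendsto_rpow_div_log_atTop (e := α - γ) (by linarith))).comp
    tendsto_natCast_atTop_atTop).congr' ?_
  filter_upwards [eventually_ge_atTop 2] with n hn
  rw [natCast_div_aSeq_eq hα.ne' hn]
  rfl

lemma tendsto_natCast_div_aSeq_nhds_zero (hα : 0 < α) (hαγ : α ≤ γ) :
    Tendsto (fun n => n / aSeq α γ n) atTop (𝓝 0) := by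
  refine ((tendsto_rpow_div_log_rpow_nhds_zero (e := α - γ) (p := 1 / α) (by linarith)
    (by positivity)).comp
    tendsto_natCast_atTop_atTop).congr' ?_
  filter_upwards [eventually_ge_atTop 2] with n hn
  rw [natCast_div_aSeq_eq hα.ne' hn]
  rfl

end ASeq

theorem stmt18 (α γ : ℝ) (hα : 1 < α) (hγ : 2 < γ) :
    (γ < α → Tendsto (fun n : ℕ =>
      ∫ x in Set.Ioc 1 (Real.sqrt (aSeq α γ n)),
        α * x ^ (-α - 1) *
          ((1 - (aSeq α γ n) ^ (-α/2)) ^ (n - 1) -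
            (∫ y in Set.Ioc 1 (Real.sqrt (aSeq α γ n)),
              (1 - x * y / aSeq α γ n) * (α * y ^ (-α - 1))) ^ (n - 1)))
      atTop (nhds 1)) ∧
    (α ≤ γ → Tendsto (fun n : ℕ =>
      (∫ x in Set.Ioc 1 (Real.sqrt (aSeq α γ n)),
        α * x ^ (-α - 1) *
          ((1 - (aSeq α γ n) ^ (-α/2)) ^ (n - 1) -
            (∫ y in Set.Ioc 1 (Real.sqrt (aSeq α γ n)),
              (1 - x * y / aSeq α γ n) * (α * y ^ (-α - 1))) ^ (n - 1)))
      / ((α/(α-1))^2 * (n : ℝ) / aSeq α γ n)) atTop (nhds 1)) := by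
  have hα₀ : 0 < α := by linarith
  have ha := tendsto_aSeq hα₀ (by linarith : 0 < γ)
  have hb := tendsto_natCast_mul_aSeq_rpow_neg_half hα₀ hγ
  exact ⟨fun hγα => tendsto_nonIsolatedProb_of_tendsto_div_atTop hα ha hb
      (tendsto_natCast_div_aSeq_atTop hα₀ hγα),
    fun hαγ => tendsto_nonIsolatedProb_div_of_tendsto_div_zero hα ha hb
      (tendsto_natCast_div_aSeq_nhds_zero hα₀ hαγ)⟩
end
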